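/- arXiv:1301.4653 — 7 statements merged into one kernel-verified Lean document; each statement's English description precedes it below -/
import Mathlib

section
/- The centralizer 𝔨_e decomposes as an internal direct sum of vector spaces 𝔨_e = 𝔥 ⊕ 𝔫₀ ⊕ 𝔫₁, where: 𝔥 is the subspace of all x ∈ 𝔨_e with x(V[i]) ⊆ V[i] for every i; 𝔫₀ is the subspace of all x ∈ 𝔨_e with x(V[i]) ⊆ V[i′] for every i with i ≠ i′ and x(V[i]) = 0 for every i with i = i′; and 𝔫₁ is the subspace of all x ∈ 𝔨_e with x(V[i]) ⊆ ⊕_{j ∉ {i,i′}} V[j] for every i. -/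
open Finset

/-- `lam` (with parts `lam 1 ≥ lam 2 ≥ … ≥ lam n ≥ 1`, and `lam i = 0` for `i = 0` and
`i > n`) is a partition of `N` belonging to `𝒫_ε(N)`: every part `v` with
`ε·(−1)^v = 1` occurs with even multiplicity. -/
structure KSPartition (ε : ℤ) (N n : ℕ) (lam : ℕ → ℕ) : Prop where
  zero : lam 0 = 0
  pos : ∀ i : ℕ, 1 ≤ i → i ≤ n → 1 ≤ lam i
  mono : ∀ i : ℕ, 1 ≤ i → lam (i + 1) ≤ lam i
  top : ∀ i : ℕ, n < i → lam i = 0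
  sum_eq : ∑ i ∈ Finset.Icc 1 n, lam i = N
  parity : ∀ v : ℕ, 1 ≤ v → ε * (-1 : ℤ) ^ v = 1 →
    Even (((Finset.Icc 1 n).filter (fun i => lam i = v)).card)

/-- `(i, i+1)` is a 2-step of `lam`. -/
def IsTwoStep (ε : ℤ) (lam : ℕ → ℕ) (i : ℕ) : Prop :=
  1 ≤ i ∧ 1 ≤ lam (i + 1) ∧ lam (i + 1) ≤ lam i ∧
    ε * (-1 : ℤ) ^ lam i = -1 ∧ ε * (-1 : ℤ) ^ lam (i + 1) = -1 ∧
    lam (i - 1) ≠ lam i ∧ lam (i + 1) ≠ lam (i + 2)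

/-- `Δ(λ)`, the set of 2-steps of `lam` (a 2-step `(i,i+1)` is recorded by its index `i`). -/
def twoSteps (ε : ℤ) (lam : ℕ → ℕ) : Set ℕ := {i | IsTwoStep ε lam i}

/-- `s(λ) = Σ_i ⌊(λ_i − λ_{i+1})/2⌋`. -/
def sVal (lam : ℕ → ℕ) (n : ℕ) : ℕ :=
  ∑ i ∈ Finset.Icc 1 n, (lam i - lam (i + 1)) / 2

/-- The centraliser `𝔨_e` of `e` in the Lie algebra
`𝔨 = {x ∈ 𝔤𝔩(V) : Ψ(xu,v) + Ψ(u,xv) = 0 for all u,v}`, as a subset of `End(V)`. -/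
def skewCentralizer (k : Type*) [Field k] (V : Type*) [AddCommGroup V] [Module k V]
    (Ψ : V →ₗ[k] V →ₗ[k] k) (e : Module.End k V) : Set (Module.End k V) :=
  {x | (∀ u v : V, Ψ (x u) v + Ψ u (x v) = 0) ∧ x * e = e * x}

/-- The set of commutators `[x, y] = x y − y x` with `x, y ∈ 𝔨_e`; its span is the
derived subalgebra `[𝔨_e, 𝔨_e]`. -/
def keCommutators (k : Type*) [Field k] (V : Type*) [AddCommGroup V] [Module k V]
    (Ψ : V →ₗ[k] V →ₗ[k] k) (e : Module.End k V) : Set (Module.End k V) :=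
  {z | ∃ x ∈ skewCentralizer k V Ψ e, ∃ y ∈ skewCentralizer k V Ψ e,
    z = x * y - y * x}

/-- The Jordan block space `V[i] = span{e^s w_i : 0 ≤ s < λ_i}`. -/
def blockSpan (k : Type*) [Field k] (V : Type*) [AddCommGroup V] [Module k V]
    (e : Module.End k V) (lam : ℕ → ℕ) (w : ℕ → V) (i : ℕ) : Submodule k V :=
  Submodule.span k {v : V | ∃ s : ℕ, s < lam i ∧ v = (e ^ s) (w i)}

/-- `𝔥`: the set of `x ∈ 𝔨_e` with `x(V[i]) ⊆ V[i]` for every `i`. -/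
def hPart (k : Type*) [Field k] (V : Type*) [AddCommGroup V] [Module k V]
    (Ψ : V →ₗ[k] V →ₗ[k] k) (e : Module.End k V) (lam : ℕ → ℕ) (w : ℕ → V)
    (n : ℕ) : Set (Module.End k V) :=
  {x ∈ skewCentralizer k V Ψ e |
    ∀ i : ℕ, 1 ≤ i → i ≤ n →
      ∀ v ∈ blockSpan k V e lam w i, x v ∈ blockSpan k V e lam w i}

/-- `𝔫₀`: the set of `x ∈ 𝔨_e` with `x(V[i]) ⊆ V[i′]` when `i ≠ i′` and `x(V[i]) = 0`
when `i = i′`. -/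
def n0Part (k : Type*) [Field k] (V : Type*) [AddCommGroup V] [Module k V]
    (Ψ : V →ₗ[k] V →ₗ[k] k) (e : Module.End k V) (lam : ℕ → ℕ) (w : ℕ → V)
    (σ : ℕ → ℕ) (n : ℕ) : Set (Module.End k V) :=
  {x ∈ skewCentralizer k V Ψ e |
    ∀ i : ℕ, 1 ≤ i → i ≤ n →
      (σ i ≠ i → ∀ v ∈ blockSpan k V e lam w i, x v ∈ blockSpan k V e lam w (σ i)) ∧
      (σ i = i → ∀ v ∈ blockSpan k V e lam w i, x v = 0)}

/-- `𝔫₁`: the set of `x ∈ 𝔨_e` with `x(V[i]) ⊆ ⊕_{j ∉ {i, i′}} V[j]` for every `i`. -/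
def n1Part (k : Type*) [Field k] (V : Type*) [AddCommGroup V] [Module k V]
    (Ψ : V →ₗ[k] V →ₗ[k] k) (e : Module.End k V) (lam : ℕ → ℕ) (w : ℕ → V)
    (σ : ℕ → ℕ) (n : ℕ) : Set (Module.End k V) :=
  {x ∈ skewCentralizer k V Ψ e |
    ∀ i : ℕ, 1 ≤ i → i ≤ n →
      ∀ v ∈ blockSpan k V e lam w i,
        x v ∈ ⨆ j ∈ {j : ℕ | 1 ≤ j ∧ j ≤ n ∧ j ≠ i ∧ j ≠ σ i},
          blockSpan k V e lam w j}

-- AUX: closure lemmas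
section Aux
variable (k : Type*) [Field k] (V : Type*) [AddCommGroup V] [Module k V]
    (Ψ : V →ₗ[k] V →ₗ[k] k) (e : Module.End k V) (lam : ℕ → ℕ) (w : ℕ → V)
    (σ : ℕ → ℕ) (n : ℕ)

lemma skew_zero_mem : (0 : Module.End k V) ∈ skewCentralizer k V Ψ e :=
  ⟨fun u v => by simp, by simp⟩

lemma skew_add_mem {a b : Module.End k V} (ha : a ∈ skewCentralizer k V Ψ e)
    (hb : b ∈ skewCentralizer k V Ψ e) : a + b ∈ skewCentralizer k V Ψ e := by
  refine ⟨fun u v => ?_, by rw [add_mul, mul_add, ha.2, hb.2]⟩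
  simp only [LinearMap.add_apply, map_add]
  linear_combination ha.1 u v + hb.1 u v

lemma skew_smul_mem (c : k) {a : Module.End k V} (ha : a ∈ skewCentralizer k V Ψ e) :
    c • a ∈ skewCentralizer k V Ψ e := by
  refine ⟨fun u v => ?_, by rw [smul_mul_assoc, mul_smul_comm, ha.2]⟩
  simp only [LinearMap.smul_apply, map_smul, smul_eq_mul]
  linear_combination c * ha.1 u v

def hSub : Submodule k (Module.End k V) where
  carrier := hPart k V Ψ e lam w n
  zero_mem' := ⟨skew_zero_mem k V Ψ e, fun i _ _ v _ => by
    simp [Submodule.zero_mem]⟩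
  add_mem' := fun ha hb => ⟨skew_add_mem k V Ψ e ha.1 hb.1, fun i h1 h2 v hv => by
    simpa [LinearMap.add_apply] using
      Submodule.add_mem _ (ha.2 i h1 h2 v hv) (hb.2 i h1 h2 v hv)⟩
  smul_mem' := fun c a ha => ⟨skew_smul_mem k V Ψ e c ha.1, fun i h1 h2 v hv => by
    simpa [LinearMap.smul_apply] using Submodule.smul_mem _ c (ha.2 i h1 h2 v hv)⟩

def n0Sub : Submodule k (Module.End k V) where
  carrier := n0Part k V Ψ e lam w σ n
  zero_mem' := ⟨skew_zero_mem k V Ψ e, fun i _ _ =>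
    ⟨fun _ v _ => by simp [Submodule.zero_mem], fun _ v _ => by simp⟩⟩
  add_mem' := fun ha hb => ⟨skew_add_mem k V Ψ e ha.1 hb.1, fun i h1 h2 =>
    ⟨fun hne v hv => by
      simpa [LinearMap.add_apply] using
        Submodule.add_mem _ ((ha.2 i h1 h2).1 hne v hv) ((hb.2 i h1 h2).1 hne v hv),
     fun heq v hv => by
      simp [LinearMap.add_apply, (ha.2 i h1 h2).2 heq v hv, (hb.2 i h1 h2).2 heq v hv]⟩⟩
  smul_mem' := fun c a ha => ⟨skew_smul_mem k V Ψ e c ha.1, fun i h1 h2 =>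
    ⟨fun hne v hv => by
      simpa [LinearMap.smul_apply] using
        Submodule.smul_mem _ c ((ha.2 i h1 h2).1 hne v hv),
     fun heq v hv => by simp [LinearMap.smul_apply, (ha.2 i h1 h2).2 heq v hv]⟩⟩

def n1Sub : Submodule k (Module.End k V) where
  carrier := n1Part k V Ψ e lam w σ n
  zero_mem' := ⟨skew_zero_mem k V Ψ e, fun i _ _ v _ => by simp [Submodule.zero_mem]⟩
  add_mem' := fun ha hb => ⟨skew_add_mem k V Ψ e ha.1 hb.1, fun i h1 h2 v hv => by
    simpa [LinearMap.add_apply] using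
      Submodule.add_mem _ (ha.2 i h1 h2 v hv) (hb.2 i h1 h2 v hv)⟩
  smul_mem' := fun c a ha => ⟨skew_smul_mem k V Ψ e c ha.1, fun i h1 h2 v hv => by
    simpa [LinearMap.smul_apply] using Submodule.smul_mem _ c (ha.2 i h1 h2 v hv)⟩


lemma skew_sub_mem (k : Type*) [Field k] (V : Type*) [AddCommGroup V] [Module k V]
    (Ψ : V →ₗ[k] V →ₗ[k] k) (e : Module.End k V) {a b : Module.End k V}
    (ha : a ∈ skewCentralizer k V Ψ e) (hb : b ∈ skewCentralizer k V Ψ e) :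
    a - b ∈ skewCentralizer k V Ψ e := by
  refine ⟨fun u v => ?_, by rw [sub_mul, mul_sub, ha.2, hb.2]⟩
  simp only [LinearMap.sub_apply, map_sub]
  linear_combination ha.1 u v - hb.1 u v

end Aux


/-- The centraliser `𝔨_e` decomposes as the internal direct sum `𝔥 ⊕ 𝔫₀ ⊕ 𝔫₁`. -/
theorem stmt3 (k : Type*) [Field k] [IsAlgClosed k] (hchar : (2 : k) ≠ 0)
    (V : Type*) [AddCommGroup V] [Module k V] [FiniteDimensional k V]
    (N : ℕ) (hN : 2 ≤ N) (hdim : Module.finrank k V = N)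
    (ε : ℤ) (hε : ε = 1 ∨ ε = -1)
    (Ψ : V →ₗ[k] V →ₗ[k] k)
    (hsymm : ∀ u v : V, Ψ u v = (ε : k) * Ψ v u)
    (hnd : ∀ u : V, (∀ v : V, Ψ u v = 0) → u = 0)
    (e : Module.End k V) (he_nil : IsNilpotent e)
    (he_skew : ∀ u v : V, Ψ (e u) v + Ψ u (e v) = 0)
    (n : ℕ) (lam : ℕ → ℕ)
    (hlam0 : lam 0 = 0)
    (hpos : ∀ i : ℕ, 1 ≤ i → i ≤ n → 1 ≤ lam i)
    (hmono : ∀ i : ℕ, 1 ≤ i → lam (i + 1) ≤ lam i)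
    (htop : ∀ i : ℕ, n < i → lam i = 0)
    (hsum : ∑ i ∈ Finset.Icc 1 n, lam i = N)
    (hJordan : ∀ j : ℕ, 1 ≤ j →
      (((Finset.Icc 1 n).filter (fun i => j ≤ lam i)).card) =
        Module.finrank k (LinearMap.ker (e ^ j)) -
          Module.finrank k (LinearMap.ker (e ^ (j - 1))))
    (w : ℕ → V) (σ : ℕ → ℕ)
    (hσ : ∀ i : ℕ, 1 ≤ i → i ≤ n → 1 ≤ σ i ∧ σ i ≤ n ∧ σ (σ i) = i)
    (hbasis_li : LinearIndependent k
      (fun p : {p : ℕ × ℕ // 1 ≤ p.1 ∧ p.1 ≤ n ∧ p.2 < lam p.1} =>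
        (e ^ (p : ℕ × ℕ).2) (w (p : ℕ × ℕ).1)))
    (hbasis_span : Submodule.span k
      {v : V | ∃ i s : ℕ, 1 ≤ i ∧ i ≤ n ∧ s < lam i ∧ v = (e ^ s) (w i)} = ⊤)
    (hσlam : ∀ i : ℕ, 1 ≤ i → i ≤ n → lam (σ i) = lam i)
    (horth : ∀ i j : ℕ, 1 ≤ i → i ≤ n → 1 ≤ j → j ≤ n → j ≠ σ i →
      ∀ u ∈ blockSpan k V e lam w i, ∀ x ∈ blockSpan k V e lam w j, Ψ u x = 0)
    (hfix : ∀ i : ℕ, 1 ≤ i → i ≤ n → (σ i = i ↔ ε * (-1 : ℤ) ^ lam i = -1)) :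
    Submodule.span k (hPart k V Ψ e lam w n) ⊓
        Submodule.span k (n0Part k V Ψ e lam w σ n) = ⊥ ∧
      (Submodule.span k (hPart k V Ψ e lam w n) ⊔
          Submodule.span k (n0Part k V Ψ e lam w σ n)) ⊓
        Submodule.span k (n1Part k V Ψ e lam w σ n) = ⊥ ∧
      Submodule.span k (hPart k V Ψ e lam w n) ⊔
          Submodule.span k (n0Part k V Ψ e lam w σ n) ⊔
          Submodule.span k (n1Part k V Ψ e lam w σ n) =
        Submodule.span k (skewCentralizer k V Ψ e) := by
  classical
  set ι := {p : ℕ × ℕ // 1 ≤ p.1 ∧ p.1 ≤ n ∧ p.2 < lam p.1} with hι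
  set fam : ι → V := fun p => (e ^ (p : ℕ × ℕ).2) (w (p : ℕ × ℕ).1) with hfam
  have hrange : Set.range fam =
      {v : V | ∃ i s : ℕ, 1 ≤ i ∧ i ≤ n ∧ s < lam i ∧ v = (e ^ s) (w i)} := by
    ext u
    constructor
    · rintro ⟨⟨⟨i, s⟩, h1, h2, h3⟩, rfl⟩
      exact ⟨i, s, h1, h2, h3, rfl⟩
    · rintro ⟨i, s, h1, h2, h3, rfl⟩
      exact ⟨⟨(i, s), h1, h2, h3⟩, rfl⟩
  have hgen : ∀ i s, s < lam i → (e ^ s) (w i) ∈ blockSpan k V e lam w i :=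
    fun i s hs => Submodule.subset_span ⟨s, hs, rfl⟩
  have hwmem : ∀ i, 1 ≤ i → i ≤ n → w i ∈ blockSpan k V e lam w i := by
    intro i h1 h2
    simpa using hgen i 0 (hpos i h1 h2)
  -- kernel dimensions
  have hker : ∀ j : ℕ, Module.finrank k (LinearMap.ker (e ^ j)) =
      ∑ i ∈ Icc 1 n, min (lam i) j := by
    intro j
    induction j with
    | zero =>
      rw [pow_zero, Module.End.one_eq_id, LinearMap.ker_id]
      simp [finrank_bot]
    | succ j ih =>
      have hle : Module.finrank k (LinearMap.ker (e ^ j)) ≤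
          Module.finrank k (LinearMap.ker (e ^ (j + 1))) := by
        apply Submodule.finrank_mono
        intro x hx
        simp only [LinearMap.mem_ker] at hx ⊢
        rw [pow_succ', Module.End.mul_apply, hx, map_zero]
      have hJ := hJordan (j + 1) (by omega)
      rw [show j + 1 - 1 = j from rfl] at hJ
      have hcard : ((Icc 1 n).filter (fun i => j + 1 ≤ lam i)).card =
          ∑ i ∈ Icc 1 n, (if j + 1 ≤ lam i then 1 else 0) := Finset.card_filter _ _
      have hstep : ∑ i ∈ Icc 1 n, min (lam i) (j + 1) =
          ∑ i ∈ Icc 1 n, min (lam i) j +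
            ∑ i ∈ Icc 1 n, (if j + 1 ≤ lam i then 1 else 0) := by
        rw [← Finset.sum_add_distrib]
        apply Finset.sum_congr rfl
        intro i _
        split_ifs <;> omega
      omega
  -- range of e^m
  have hrange_pow : ∀ m : ℕ, 1 ≤ m → ∀ v : V, (e ^ m) v ∈
      Submodule.span k
        {u : V | ∃ i s : ℕ, 1 ≤ i ∧ i ≤ n ∧ m ≤ s ∧ s < lam i ∧ u = (e ^ s) (w i)} := by
    intro m _ v
    set S : Set V :=
      {u : V | ∃ i s : ℕ, 1 ≤ i ∧ i ≤ n ∧ m ≤ s ∧ s < lam i ∧ u = (e ^ s) (w i)} with hS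
    set F : Finset ((_ : ℕ) × ℕ) := (Icc 1 n).sigma (fun i => Ico m (lam i)) with hF
    have hFmem : ∀ p : F, 1 ≤ p.1.1 ∧ p.1.1 ≤ n ∧ m ≤ p.1.2 ∧ p.1.2 < lam p.1.1 := by
      rintro ⟨⟨i, s⟩, hp⟩
      simp only [hF, Finset.mem_sigma, Finset.mem_Icc, Finset.mem_Ico] at hp
      exact ⟨hp.1.1, hp.1.2, hp.2.1, hp.2.2⟩
    set g : F → V := fun p => (e ^ p.1.2) (w p.1.1) with hg
    have hemb : ∀ p : F, (⟨(p.1.1, p.1.2), (hFmem p).1, (hFmem p).2.1, (hFmem p).2.2.2⟩ : ι) =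
        (⟨(p.1.1, p.1.2), (hFmem p).1, (hFmem p).2.1, (hFmem p).2.2.2⟩ : ι) := fun _ => rfl
    have gli : LinearIndependent k g := by
      have := hbasis_li.comp
        (fun p : F => (⟨(p.1.1, p.1.2), (hFmem p).1, (hFmem p).2.1, (hFmem p).2.2.2⟩ : ι))
        (by
          rintro ⟨⟨i, s⟩, hp⟩ ⟨⟨i', s'⟩, hp'⟩ h
          simp only [Subtype.mk.injEq, Prod.mk.injEq] at h
          apply Subtype.ext
          simp only
          ext <;> simp [h.1, h.2])
      exact this
    have hspan_le : Submodule.span k (Set.range g) ≤ LinearMap.range (e ^ m) := by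
      rw [Submodule.span_le]
      rintro _ ⟨p, rfl⟩
      refine ⟨(e ^ (p.1.2 - m)) (w p.1.1), ?_⟩
      rw [← Module.End.mul_apply, ← pow_add]
      congr 2
      have := (hFmem p).2.2.1
      omega
    have hcardF : F.card = ∑ i ∈ Icc 1 n, (lam i - m) := by
      rw [hF, Finset.card_sigma]
      apply Finset.sum_congr rfl
      intro i _
      simp [Nat.card_Ico]
    have hfr : Module.finrank k (Submodule.span k (Set.range g)) = F.card := by
      rw [finrank_span_eq_card gli, Fintype.card_coe]
    have hrk : Module.finrank k (LinearMap.range (e ^ m)) +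
        Module.finrank k (LinearMap.ker (e ^ m)) = N := by
      rw [LinearMap.finrank_range_add_finrank_ker, hdim]
    have hNsum : ∑ i ∈ Icc 1 n, (lam i - m) + ∑ i ∈ Icc 1 n, min (lam i) m = N := by
      rw [← Finset.sum_add_distrib, ← hsum]
      apply Finset.sum_congr rfl
      intro i _
      omega
    have heq : Submodule.span k (Set.range g) = LinearMap.range (e ^ m) := by
      apply Submodule.eq_of_le_of_finrank_le hspan_le
      rw [hfr, hcardF]
      have := hker m
      omega
    have hmem : (e ^ m) v ∈ Submodule.span k (Set.range g) := by
      rw [heq]; exact ⟨v, rfl⟩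
    refine Submodule.span_mono ?_ hmem
    rintro _ ⟨p, rfl⟩
    exact ⟨p.1.1, p.1.2, (hFmem p).1, (hFmem p).2.1, (hFmem p).2.2.1, (hFmem p).2.2.2, rfl⟩
  -- sign lemma
  have hsign : ∀ (t : ℕ) (u v : V), Ψ ((e ^ t) u) v = (-1 : k) ^ t * Ψ u ((e ^ t) v) := by
    intro t
    induction t with
    | zero => intro u v; simp
    | succ t ih =>
      intro u v
      have h1 : (e ^ (t + 1)) u = (e ^ t) (e u) := by
        rw [pow_succ, Module.End.mul_apply]
      have h2 : Ψ (e u) ((e ^ t) v) = -Ψ u (e ((e ^ t) v)) :=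
        eq_neg_of_add_eq_zero_left (he_skew u ((e ^ t) v))
      have h3 : e ((e ^ t) v) = (e ^ (t + 1)) v := by
        rw [pow_succ', Module.End.mul_apply]
      rw [h1, ih (e u) v, h2, h3]
      ring
  -- Lemma A
  have hA : ∀ i, 1 ≤ i → i ≤ n → (e ^ lam i) (w i) = 0 := by
    intro i h1 h2
    apply hnd
    intro v
    rw [hsign (lam i) (w i) v]
    have hv := hrange_pow (lam i) (hpos i h1 h2) v
    have hker_le : Submodule.span k
        {u : V | ∃ j s : ℕ, 1 ≤ j ∧ j ≤ n ∧ lam i ≤ s ∧ s < lam j ∧ u = (e ^ s) (w j)} ≤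
        LinearMap.ker (Ψ (w i)) := by
      rw [Submodule.span_le]
      rintro _ ⟨j, s, hj1, hj2, hs1, hs2, rfl⟩
      simp only [SetLike.mem_coe, LinearMap.mem_ker]
      have hjne : j ≠ σ i := by
        intro hne
        subst hne
        have := hσlam i h1 h2
        omega
      exact horth i j h1 h2 hj1 hj2 hjne (w i) (hwmem i h1 h2) _ (hgen j s hs2)
    have := hker_le hv
    simp only [LinearMap.mem_ker] at this
    rw [this, mul_zero]
  -- basis
  have hspan_top : ⊤ ≤ Submodule.span k (Set.range fam) := by
    rw [hrange, hbasis_span]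
  set B : Module.Basis ι k V := Module.Basis.mk hbasis_li hspan_top with hB
  have hBval : ∀ p : ι, B p = (e ^ (p : ℕ × ℕ).2) (w (p : ℕ × ℕ).1) := fun p => by
    rw [hB, Module.Basis.mk_apply]
  -- block spans as images
  have hblock_eq : ∀ i, 1 ≤ i → i ≤ n →
      blockSpan k V e lam w i =
        Submodule.span k (fam '' {p : ι | (p : ℕ × ℕ).1 = i}) := by
    intro i h1 h2
    unfold blockSpan
    congr 1
    ext u
    constructor
    · rintro ⟨s, hs, rfl⟩
      exact ⟨⟨(i, s), h1, h2, hs⟩, rfl, rfl⟩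
    · rintro ⟨⟨⟨j, s⟩, hj1, hj2, hs⟩, (hji : j = i), rfl⟩
      subst hji
      exact ⟨s, hs, rfl⟩
  have hblockdisj : ∀ (S T : Set ℕ), Disjoint S T →
      Disjoint (Submodule.span k (fam '' {p : ι | (p : ℕ × ℕ).1 ∈ S}))
        (Submodule.span k (fam '' {p : ι | (p : ℕ × ℕ).1 ∈ T})) := by
    intro S T hST
    apply hbasis_li.disjoint_span_image
    rw [Set.disjoint_left]
    rintro p hpS hpT
    exact Set.disjoint_left.mp hST hpS hpT
  -- projections
  set P : ℕ → Module.End k V :=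
    fun i => B.constr k (fun p => if (p : ℕ × ℕ).1 = i then B p else 0) with hP
  have hP1 : ∀ (i : ℕ) (p : ι), P i (B p) = if (p : ℕ × ℕ).1 = i then B p else 0 :=
    fun i p => B.constr_basis k _ p
  have hP1' : ∀ (i j s : ℕ) (h1 : 1 ≤ j) (h2 : j ≤ n) (hs : s < lam j),
      P i ((e ^ s) (w j)) = if j = i then (e ^ s) (w j) else 0 := by
    intro i j s h1 h2 hs
    have := hP1 i ⟨(j, s), h1, h2, hs⟩
    rwa [hBval] at this
  have hP2 : ∀ (i : ℕ) (y : V), P i y ∈ blockSpan k V e lam w i := by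
    intro i y
    have hy : y ∈ Submodule.span k
        {v : V | ∃ i s : ℕ, 1 ≤ i ∧ i ≤ n ∧ s < lam i ∧ v = (e ^ s) (w i)} := by
      rw [hbasis_span]; trivial
    induction hy using Submodule.span_induction with
    | mem v hv =>
      obtain ⟨j, s, h1, h2, hs, rfl⟩ := hv
      rw [hP1' i j s h1 h2 hs]
      split_ifs with h
      · subst h; exact hgen j s hs
      · exact Submodule.zero_mem _
    | zero => simp [Submodule.zero_mem]
    | add a b _ _ ha hb => rw [map_add]; exact Submodule.add_mem _ ha hb
    | smul c a _ ha => rw [map_smul]; exact Submodule.smul_mem _ c ha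
  have hP3a : ∀ i, 1 ≤ i → i ≤ n → ∀ v ∈ blockSpan k V e lam w i, P i v = v := by
    intro i h1 h2 v hv
    induction hv using Submodule.span_induction with
    | mem v hv =>
      obtain ⟨s, hs, rfl⟩ := hv
      rw [hP1' i i s h1 h2 hs, if_pos rfl]
    | zero => simp
    | add a b _ _ ha hb => rw [map_add, ha, hb]
    | smul c a _ ha => rw [map_smul, ha]
  have hP3b : ∀ i l, 1 ≤ i → i ≤ n → l ≠ i → ∀ v ∈ blockSpan k V e lam w i,
      P l v = 0 := by
    intro i l h1 h2 hne v hv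
    induction hv using Submodule.span_induction with
    | mem v hv =>
      obtain ⟨s, hs, rfl⟩ := hv
      rw [hP1' l i s h1 h2 hs, if_neg (fun h => hne h.symm)]
    | zero => simp
    | add a b _ _ ha hb => rw [map_add, ha, hb, add_zero]
    | smul c a _ ha => rw [map_smul, ha, smul_zero]
  have hP4 : ∀ y : V, ∑ i ∈ Icc 1 n, P i y = y := by
    intro y
    have hsum_eq : (∑ i ∈ Icc 1 n, P i) = (1 : Module.End k V) := by
      apply LinearMap.ext_on hbasis_span
      rintro v ⟨j, s, h1, h2, hs, rfl⟩
      rw [LinearMap.sum_apply]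
      have : ∀ i ∈ Icc 1 n, P i ((e ^ s) (w j)) =
          if i = j then (e ^ s) (w j) else 0 := by
        intro i _
        rw [hP1' i j s h1 h2 hs]
        simp only [eq_comm]
      rw [Finset.sum_congr rfl this, Finset.sum_ite_eq' (Icc 1 n) j]
      rw [if_pos (by simp [Finset.mem_Icc]; omega)]
      simp
    calc (∑ i ∈ Icc 1 n, P i y) = (∑ i ∈ Icc 1 n, P i) y := by
          rw [LinearMap.sum_apply]
      _ = y := by rw [hsum_eq]; rfl
  have hP5 : ∀ i, P i * e = e * P i := by
    intro i
    apply LinearMap.ext_on hbasis_span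
    rintro v ⟨j, s, h1, h2, hs, rfl⟩
    have hev : e ((e ^ s) (w j)) = (e ^ (s + 1)) (w j) := by
      rw [pow_succ', Module.End.mul_apply]
    rw [Module.End.mul_apply, Module.End.mul_apply, hev]
    rcases Nat.lt_or_ge (s + 1) (lam j) with hlt | hge
    · rw [hP1' i j (s + 1) h1 h2 hlt, hP1' i j s h1 h2 hs]
      split_ifs with h
      · rw [hev]
      · rw [map_zero]
    · have hsl : s + 1 = lam j := by omega
      rw [hsl, hA j h1 h2, map_zero, hP1' i j s h1 h2 hs]
      split_ifs with h
      · rw [hev, hsl, hA j h1 h2]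
      · rw [map_zero]
  -- adjointness
  have hP6 : ∀ j, 1 ≤ j → j ≤ n → ∀ y v : V, Ψ (P j y) v = Ψ y (P (σ j) v) := by
    intro j hj1 hj2 y v
    have key : (Ψ ∘ₗ P j) = Ψ.compl₂ (P (σ j)) := by
      apply LinearMap.ext_on hbasis_span
      rintro y ⟨a, s, ha1, ha2, hs, rfl⟩
      apply LinearMap.ext_on hbasis_span
      rintro v ⟨b, t, hb1, hb2, ht, rfl⟩
      simp only [LinearMap.comp_apply, LinearMap.compl₂_apply]
      rw [hP1' j a s ha1 ha2 hs, hP1' (σ j) b t hb1 hb2 ht]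
      have hσj1 := (hσ j hj1 hj2).1
      have hσj2 := (hσ j hj1 hj2).2.1
      by_cases haj : a = j <;> by_cases hbj : b = σ j
      · rw [if_pos haj, if_pos hbj]
      · rw [if_pos haj, if_neg hbj]
        subst haj
        rw [horth a b ha1 ha2 hb1 hb2 hbj _ (hgen a s hs) _ (hgen b t ht)]
        simp
      · rw [if_neg haj, if_pos hbj]
        have hbne : b ≠ σ a := by
          intro hh
          apply haj
          have hσσj := (hσ j hj1 hj2).2.2
          have hσσa := (hσ a ha1 ha2).2.2
          have hsa : σ a = σ j := by rw [← hh, hbj]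
          rw [← hσσa, hsa]
          exact hσσj
        rw [horth a b ha1 ha2 hb1 hb2 hbne _ (hgen a s hs) _ (hgen b t ht)]
        simp
      · rw [if_neg haj, if_neg hbj]
        simp
    have := LinearMap.congr_fun (LinearMap.congr_fun key y) v
    simpa using this
  -- span = submodule
  have hspanH : Submodule.span k (hPart k V Ψ e lam w n) = hSub k V Ψ e lam w n :=
    Submodule.span_eq (hSub k V Ψ e lam w n)
  have hspanN0 : Submodule.span k (n0Part k V Ψ e lam w σ n) = n0Sub k V Ψ e lam w σ n :=
    Submodule.span_eq (n0Sub k V Ψ e lam w σ n)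
  have hspanN1 : Submodule.span k (n1Part k V Ψ e lam w σ n) = n1Sub k V Ψ e lam w σ n :=
    Submodule.span_eq (n1Sub k V Ψ e lam w σ n)
  -- biSup as image span
  have hsup_eq : ∀ (S : Set ℕ), (∀ j ∈ S, 1 ≤ j ∧ j ≤ n) →
      (⨆ j ∈ S, blockSpan k V e lam w j) =
        Submodule.span k (fam '' {p : ι | (p : ℕ × ℕ).1 ∈ S}) := by
    intro S hS
    calc (⨆ j ∈ S, blockSpan k V e lam w j)
        = ⨆ j ∈ S, Submodule.span k (fam '' {p : ι | (p : ℕ × ℕ).1 = j}) :=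
          biSup_congr (fun j hj => hblock_eq j (hS j hj).1 (hS j hj).2)
      _ = Submodule.span k (⋃ j ∈ S, fam '' {p : ι | (p : ℕ × ℕ).1 = j}) :=
          (Submodule.span_iUnion₂ _).symm
      _ = Submodule.span k (fam '' {p : ι | (p : ℕ × ℕ).1 ∈ S}) := by
          have hsets : (⋃ j ∈ S, {p : ι | (p : ℕ × ℕ).1 = j}) =
              {p : ι | (p : ℕ × ℕ).1 ∈ S} := by
            ext p
            constructor
            · intro hp
              obtain ⟨j, hj, hpj⟩ := Set.mem_iUnion₂.mp hp
              show (p : ℕ × ℕ).1 ∈ S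
              rw [show (p : ℕ × ℕ).1 = j from hpj]
              exact hj
            · intro hp
              exact Set.mem_iUnion₂.mpr ⟨(p : ℕ × ℕ).1, hp, rfl⟩
          rw [← Set.image_iUnion₂, hsets]
  refine ⟨?_, ?_, ?_⟩
  -- first conjunct
  · rw [hspanH, hspanN0, eq_bot_iff]
    intro x hx
    obtain ⟨hxH, hxN⟩ := Submodule.mem_inf.mp hx
    have hxH' : x ∈ hPart k V Ψ e lam w n := hxH
    have hxN' : x ∈ n0Part k V Ψ e lam w σ n := hxN
    rw [Submodule.mem_bot]
    apply LinearMap.ext_on hbasis_span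
    rintro v ⟨i, s, h1, h2, hs, rfl⟩
    have hv := hgen i s hs
    show x ((e ^ s) (w i)) = (0 : Module.End k V) ((e ^ s) (w i))
    rw [LinearMap.zero_apply]
    by_cases hσi : σ i = i
    · exact (hxN'.2 i h1 h2).2 hσi _ hv
    · have hmem1 := hxH'.2 i h1 h2 _ hv
      have hmem2 := (hxN'.2 i h1 h2).1 hσi _ hv
      have hdis : Disjoint (blockSpan k V e lam w i) (blockSpan k V e lam w (σ i)) := by
        rw [hblock_eq i h1 h2, hblock_eq (σ i) (hσ i h1 h2).1 (hσ i h1 h2).2.1]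
        exact hblockdisj {i} {σ i} (Set.disjoint_singleton.mpr (fun h => hσi h.symm))
      exact Submodule.disjoint_def.mp hdis _ hmem1 hmem2
  -- second conjunct
  · rw [hspanH, hspanN0, hspanN1, eq_bot_iff]
    intro x hx
    obtain ⟨hxS, hxN1⟩ := Submodule.mem_inf.mp hx
    have hxN1' : x ∈ n1Part k V Ψ e lam w σ n := hxN1
    obtain ⟨h, hh, n0, hn0, rfl⟩ := Submodule.mem_sup.mp hxS
    have hh' : h ∈ hPart k V Ψ e lam w n := hh
    have hn0' : n0 ∈ n0Part k V Ψ e lam w σ n := hn0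
    rw [Submodule.mem_bot]
    apply LinearMap.ext_on hbasis_span
    rintro v ⟨i, s, h1, h2, hs, rfl⟩
    have hv := hgen i s hs
    show (h + n0) ((e ^ s) (w i)) = (0 : Module.End k V) ((e ^ s) (w i))
    rw [LinearMap.zero_apply]
    have hσi1 := (hσ i h1 h2).1
    have hσi2 := (hσ i h1 h2).2.1
    have hmemsup : (h + n0) ((e ^ s) (w i)) ∈
        ⨆ j ∈ ({i, σ i} : Set ℕ), blockSpan k V e lam w j := by
      rw [LinearMap.add_apply]
      apply Submodule.add_mem
      · exact Submodule.mem_iSup_of_mem i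
          (Submodule.mem_iSup_of_mem (Set.mem_insert _ _) (hh'.2 i h1 h2 _ hv))
      · by_cases hσi : σ i = i
        · rw [(hn0'.2 i h1 h2).2 hσi _ hv]
          exact Submodule.zero_mem _
        · exact Submodule.mem_iSup_of_mem (σ i)
            (Submodule.mem_iSup_of_mem (Set.mem_insert_of_mem _ rfl)
              ((hn0'.2 i h1 h2).1 hσi _ hv))
    have hmem1 := hxN1'.2 i h1 h2 _ hv
    have hdis : Disjoint (⨆ j ∈ ({i, σ i} : Set ℕ), blockSpan k V e lam w j)
        (⨆ j ∈ {j : ℕ | 1 ≤ j ∧ j ≤ n ∧ j ≠ i ∧ j ≠ σ i}, blockSpan k V e lam w j) := by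
      rw [hsup_eq ({i, σ i} : Set ℕ) (by
            rintro j hj
            rcases hj with rfl | hj
            · exact ⟨h1, h2⟩
            · rw [Set.mem_singleton_iff] at hj
              subst hj
              exact ⟨hσi1, hσi2⟩),
          hsup_eq {j : ℕ | 1 ≤ j ∧ j ≤ n ∧ j ≠ i ∧ j ≠ σ i}
            (fun j hj => ⟨hj.1, hj.2.1⟩)]
      apply hblockdisj
      rw [Set.disjoint_left]
      rintro a ha ⟨_, _, hne1, hne2⟩
      rcases ha with rfl | ha
      · exact hne1 rfl
      · rw [Set.mem_singleton_iff] at ha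
        exact hne2 ha
    exact Submodule.disjoint_def.mp hdis _ hmemsup hmem1
  -- third conjunct
  · apply le_antisymm
    · refine sup_le (sup_le ?_ ?_) ?_ <;>
        exact Submodule.span_mono (fun y hy => hy.1)
    · rw [Submodule.span_le]
      intro x hx
      set xh : Module.End k V := ∑ i ∈ Icc 1 n, P i * x * P i with hxhdef
      set x0 : Module.End k V :=
        ∑ i ∈ (Icc 1 n).filter (fun l => σ l ≠ l), P (σ i) * x * P i with hx0def
      set x1 : Module.End k V := x - xh - x0 with hx1def
      -- apply lemmas
      have hxh_app : ∀ i, 1 ≤ i → i ≤ n → ∀ v ∈ blockSpan k V e lam w i,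
          xh v = P i (x v) := by
        intro i h1 h2 v hv
        rw [hxhdef, LinearMap.sum_apply,
          Finset.sum_eq_single_of_mem i (by simp [Finset.mem_Icc]; omega)
            (fun l _ hne => by
              rw [Module.End.mul_apply, Module.End.mul_apply,
                hP3b i l h1 h2 hne v hv, map_zero, map_zero]),
          Module.End.mul_apply, Module.End.mul_apply, hP3a i h1 h2 v hv]
      have hx0_app_ne : ∀ i, 1 ≤ i → i ≤ n → σ i ≠ i → ∀ v ∈ blockSpan k V e lam w i,
          x0 v = P (σ i) (x v) := by
        intro i h1 h2 hne v hv
        rw [hx0def, LinearMap.sum_apply,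
          Finset.sum_eq_single_of_mem i
            (by simp only [Finset.mem_filter, Finset.mem_Icc]; exact ⟨⟨h1, h2⟩, hne⟩)
            (fun l _ hlne => by
              rw [Module.End.mul_apply, Module.End.mul_apply,
                hP3b i l h1 h2 hlne v hv, map_zero, map_zero]),
          Module.End.mul_apply, Module.End.mul_apply, hP3a i h1 h2 v hv]
      have hx0_app_eq : ∀ i, 1 ≤ i → i ≤ n → σ i = i → ∀ v ∈ blockSpan k V e lam w i,
          x0 v = 0 := by
        intro i h1 h2 heq v hv
        rw [hx0def, LinearMap.sum_apply]
        apply Finset.sum_eq_zero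
        intro l hl
        rw [Finset.mem_filter] at hl
        have hlne : l ≠ i := fun hli => hl.2 (hli ▸ heq)
        rw [Module.End.mul_apply, Module.End.mul_apply,
          hP3b i l h1 h2 hlne v hv, map_zero, map_zero]
      -- skewness
      have hxh_skew : ∀ u v : V, Ψ (xh u) v + Ψ u (xh v) = 0 := by
        intro u v
        have hL : Ψ (xh u) v = ∑ i ∈ Icc 1 n, Ψ (P i (x (P i u))) v := by
          rw [hxhdef, LinearMap.sum_apply, map_sum, LinearMap.sum_apply]
          exact Finset.sum_congr rfl (fun l _ => by
            rw [Module.End.mul_apply, Module.End.mul_apply])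
        have hR : Ψ u (xh v) = ∑ i ∈ Icc 1 n, Ψ u (P i (x (P i v))) := by
          rw [hxhdef, LinearMap.sum_apply, map_sum]
          exact Finset.sum_congr rfl (fun l _ => by
            rw [Module.End.mul_apply, Module.End.mul_apply])
        have hstep : ∀ i ∈ Icc 1 n,
            Ψ (P i (x (P i u))) v = -(Ψ u (P (σ i) (x (P (σ i) v)))) := by
          intro i hi
          rw [Finset.mem_Icc] at hi
          rw [hP6 i hi.1 hi.2 (x (P i u)) v,
            eq_neg_of_add_eq_zero_left (hx.1 (P i u) (P (σ i) v)),
            hP6 i hi.1 hi.2 u (x (P (σ i) v))]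
        have hre : ∑ i ∈ Icc 1 n, Ψ u (P (σ i) (x (P (σ i) v))) =
            ∑ i ∈ Icc 1 n, Ψ u (P i (x (P i v))) := by
          apply Finset.sum_nbij' σ σ
          · intro a ha
            rw [Finset.mem_Icc] at ha ⊢
            exact ⟨(hσ a ha.1 ha.2).1, (hσ a ha.1 ha.2).2.1⟩
          · intro a ha
            rw [Finset.mem_Icc] at ha ⊢
            exact ⟨(hσ a ha.1 ha.2).1, (hσ a ha.1 ha.2).2.1⟩
          · intro a ha
            rw [Finset.mem_Icc] at ha
            exact (hσ a ha.1 ha.2).2.2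
          · intro a ha
            rw [Finset.mem_Icc] at ha
            exact (hσ a ha.1 ha.2).2.2
          · intro a _
            rfl
        rw [hL, Finset.sum_congr rfl hstep, hR, Finset.sum_neg_distrib, hre]
        exact neg_add_cancel _
      have hx0_skew : ∀ u v : V, Ψ (x0 u) v + Ψ u (x0 v) = 0 := by
        intro u v
        have hL : Ψ (x0 u) v = ∑ i ∈ (Icc 1 n).filter (fun l => σ l ≠ l),
            Ψ (P (σ i) (x (P i u))) v := by
          rw [hx0def, LinearMap.sum_apply, map_sum, LinearMap.sum_apply]
          exact Finset.sum_congr rfl (fun l _ => by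
            rw [Module.End.mul_apply, Module.End.mul_apply])
        have hR : Ψ u (x0 v) = ∑ i ∈ (Icc 1 n).filter (fun l => σ l ≠ l),
            Ψ u (P (σ i) (x (P i v))) := by
          rw [hx0def, LinearMap.sum_apply, map_sum]
          exact Finset.sum_congr rfl (fun l _ => by
            rw [Module.End.mul_apply, Module.End.mul_apply])
        have hstep : ∀ i ∈ (Icc 1 n).filter (fun l => σ l ≠ l),
            Ψ (P (σ i) (x (P i u))) v = -(Ψ u (P (σ i) (x (P i v)))) := by
          intro i hi
          rw [Finset.mem_filter, Finset.mem_Icc] at hi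
          have hi1 := hi.1.1
          have hi2 := hi.1.2
          have hσ1 := (hσ i hi1 hi2).1
          have hσ2 := (hσ i hi1 hi2).2.1
          have hσσ := (hσ i hi1 hi2).2.2
          rw [hP6 (σ i) hσ1 hσ2 (x (P i u)) v, hσσ,
            eq_neg_of_add_eq_zero_left (hx.1 (P i u) (P i v)),
            hP6 i hi1 hi2 u (x (P i v))]
        rw [hL, Finset.sum_congr rfl hstep, hR, Finset.sum_neg_distrib]
        exact neg_add_cancel _
      -- commutation
      have hxh_comm : xh * e = e * xh := by
        rw [hxhdef, Finset.sum_mul, Finset.mul_sum]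
        apply Finset.sum_congr rfl
        intro i _
        calc P i * x * P i * e
            = P i * x * (P i * e) := by rw [mul_assoc]
          _ = P i * x * (e * P i) := by rw [hP5 i]
          _ = P i * x * e * P i := by rw [← mul_assoc (P i * x) e (P i)]
          _ = P i * (x * e) * P i := by rw [mul_assoc (P i) x e]
          _ = P i * (e * x) * P i := by rw [hx.2]
          _ = P i * e * x * P i := by rw [← mul_assoc (P i) e x]
          _ = e * P i * x * P i := by rw [hP5 i]
          _ = e * (P i * x * P i) := by
              rw [mul_assoc e (P i) x, mul_assoc e (P i * x) (P i)]
      have hx0_comm : x0 * e = e * x0 := by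
        rw [hx0def, Finset.sum_mul, Finset.mul_sum]
        apply Finset.sum_congr rfl
        intro i _
        calc P (σ i) * x * P i * e
            = P (σ i) * x * (P i * e) := by rw [mul_assoc]
          _ = P (σ i) * x * (e * P i) := by rw [hP5 i]
          _ = P (σ i) * x * e * P i := by rw [← mul_assoc (P (σ i) * x) e (P i)]
          _ = P (σ i) * (x * e) * P i := by rw [mul_assoc (P (σ i)) x e]
          _ = P (σ i) * (e * x) * P i := by rw [hx.2]
          _ = P (σ i) * e * x * P i := by rw [← mul_assoc (P (σ i)) e x]
          _ = e * P (σ i) * x * P i := by rw [hP5 (σ i)]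
          _ = e * (P (σ i) * x * P i) := by
              rw [mul_assoc e (P (σ i)) x, mul_assoc e (P (σ i) * x) (P i)]
      have hxh_sc : xh ∈ skewCentralizer k V Ψ e := ⟨hxh_skew, hxh_comm⟩
      have hx0_sc : x0 ∈ skewCentralizer k V Ψ e := ⟨hx0_skew, hx0_comm⟩
      have hx1_sc : x1 ∈ skewCentralizer k V Ψ e := by
        rw [hx1def]
        exact skew_sub_mem k V Ψ e (skew_sub_mem k V Ψ e hx hxh_sc) hx0_sc
      -- memberships
      have hxh_mem : xh ∈ hPart k V Ψ e lam w n :=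
        ⟨hxh_sc, fun i h1 h2 v hv => by
          rw [hxh_app i h1 h2 v hv]; exact hP2 i (x v)⟩
      have hx0_mem : x0 ∈ n0Part k V Ψ e lam w σ n :=
        ⟨hx0_sc, fun i h1 h2 =>
          ⟨fun hne v hv => by
            rw [hx0_app_ne i h1 h2 hne v hv]; exact hP2 (σ i) (x v),
           fun heq v hv => hx0_app_eq i h1 h2 heq v hv⟩⟩
      have hx1_mem : x1 ∈ n1Part k V Ψ e lam w σ n := by
        refine ⟨hx1_sc, fun i h1 h2 v hv => ?_⟩
        have hiIcc : i ∈ Icc 1 n := by rw [Finset.mem_Icc]; exact ⟨h1, h2⟩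
        have hx1v : x1 v = x v - xh v - x0 v := by
          rw [hx1def, LinearMap.sub_apply, LinearMap.sub_apply]
        rw [hxh_app i h1 h2 v hv] at hx1v
        by_cases hσi : σ i = i
        · rw [hx0_app_eq i h1 h2 hσi v hv, sub_zero] at hx1v
          have key : x1 v = ∑ l ∈ (Icc 1 n).erase i, P l (x v) := by
            rw [hx1v]
            nth_rewrite 1 [← hP4 (x v)]
            rw [← Finset.add_sum_erase _ _ hiIcc]
            abel
          rw [key]
          apply Submodule.sum_mem
          intro l hl
          rw [Finset.mem_erase, Finset.mem_Icc] at hl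
          exact Submodule.mem_iSup_of_mem l
            (Submodule.mem_iSup_of_mem
              (show l ∈ {j : ℕ | 1 ≤ j ∧ j ≤ n ∧ j ≠ i ∧ j ≠ σ i} from
                ⟨hl.2.1, hl.2.2, hl.1, by rw [hσi]; exact hl.1⟩) (hP2 l (x v)))
        · rw [hx0_app_ne i h1 h2 hσi v hv] at hx1v
          have hσmem : σ i ∈ (Icc 1 n).erase i := by
            rw [Finset.mem_erase, Finset.mem_Icc]
            exact ⟨hσi, (hσ i h1 h2).1, (hσ i h1 h2).2.1⟩
          have key : x1 v = ∑ l ∈ ((Icc 1 n).erase i).erase (σ i), P l (x v) := by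
            rw [hx1v]
            nth_rewrite 1 [← hP4 (x v)]
            rw [← Finset.add_sum_erase _ _ hiIcc, ← Finset.add_sum_erase _ _ hσmem]
            abel
          rw [key]
          apply Submodule.sum_mem
          intro l hl
          rw [Finset.mem_erase, Finset.mem_erase, Finset.mem_Icc] at hl
          exact Submodule.mem_iSup_of_mem l
            (Submodule.mem_iSup_of_mem
              (show l ∈ {j : ℕ | 1 ≤ j ∧ j ≤ n ∧ j ≠ i ∧ j ≠ σ i} from
                ⟨hl.2.2.1, hl.2.2.2, hl.2.1, hl.1⟩) (hP2 l (x v)))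
      -- assemble
      have hxsum : x = xh + x0 + x1 := by rw [hx1def]; abel
      show x ∈ Submodule.span k (hPart k V Ψ e lam w n) ⊔
          Submodule.span k (n0Part k V Ψ e lam w σ n) ⊔
          Submodule.span k (n1Part k V Ψ e lam w σ n)
      rw [hxsum]
      refine Submodule.add_mem _ (Submodule.add_mem _ ?_ ?_) ?_
      · exact Submodule.mem_sup_left (Submodule.mem_sup_left (Submodule.subset_span hxh_mem))
      · exact Submodule.mem_sup_left (Submodule.mem_sup_right (Submodule.subset_span hx0_mem))
      · exact Submodule.mem_sup_right (Submodule.subset_span hx1_mem)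
end

section
/- With 𝔥, 𝔫₀, 𝔫₁ the subspaces of 𝔨_e defined by: 𝔥 = {x ∈ 𝔨_e : x(V[i]) ⊆ V[i] for all i}, 𝔫₀ = {x ∈ 𝔨_e : x(V[i]) ⊆ V[i′] when i ≠ i′ and x(V[i]) = 0 when i = i′}, 𝔫₁ = {x ∈ 𝔨_e : x(V[i]) ⊆ ⊕_{j ∉ {i,i′}} V[j] for all i}, the following bracket inclusions hold: [𝔥,𝔥] = {0}, [𝔥,𝔫₀] ⊆ 𝔫₀, [𝔥,𝔫₁] ⊆ 𝔫₁, [𝔫₀,𝔫₀] ⊆ 𝔥, and [𝔫₀,𝔫₁] ⊆ 𝔫₁. In particular, 𝔥 is an abelian Lie subalgebra of 𝔨_e. -/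
open Finset

section Aux

variable {k : Type*} [Field k] {V : Type*} [AddCommGroup V] [Module k V]

lemma skew_bracket (Ψ : V →ₗ[k] V →ₗ[k] k) (e : Module.End k V)
    {x y : Module.End k V}
    (hx : x ∈ skewCentralizer k V Ψ e) (hy : y ∈ skewCentralizer k V Ψ e) :
    x * y - y * x ∈ skewCentralizer k V Ψ e := by
  obtain ⟨hx1, hx2⟩ := hx
  obtain ⟨hy1, hy2⟩ := hy
  constructor
  · intro u v
    have hx' : ∀ a b : V, Ψ (x a) b = - Ψ a (x b) := fun a b =>
      eq_neg_of_add_eq_zero_left (hx1 a b)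
    have hy' : ∀ a b : V, Ψ (y a) b = - Ψ a (y b) := fun a b =>
      eq_neg_of_add_eq_zero_left (hy1 a b)
    have h1 : Ψ (x (y u)) v = Ψ u (y (x v)) := by
      rw [hx' (y u) v, hy' u (x v)]; ring
    have h2 : Ψ (y (x u)) v = Ψ u (x (y v)) := by
      rw [hy' (x u) v, hx' u (y v)]; ring
    simp only [LinearMap.sub_apply, Module.End.mul_apply, map_sub, LinearMap.sub_apply]
    rw [h1, h2]; ring
  · have c1 : Commute x e := hx2
    have c2 : Commute y e := hy2
    exact Commute.sub_left (c1.mul_left c2) (c2.mul_left c1)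

lemma mem_blockSpan_poly (e : Module.End k V) (lam : ℕ → ℕ) (w : ℕ → V) (i : ℕ) {u : V}
    (hu : u ∈ blockSpan k V e lam w i) :
    ∃ p : Polynomial k, u = (Polynomial.aeval e p) (w i) := by
  induction hu using Submodule.span_induction with
  | mem v hv =>
    obtain ⟨s, _, rfl⟩ := hv
    exact ⟨Polynomial.X ^ s, by simp⟩
  | zero => exact ⟨0, by simp⟩
  | add a b _ _ ha hb =>
    obtain ⟨p, rfl⟩ := ha; obtain ⟨q, rfl⟩ := hb
    exact ⟨p + q, by simp⟩
  | smul c a _ ha =>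
    obtain ⟨p, rfl⟩ := ha
    exact ⟨c • p, by simp⟩

lemma commute_aeval {e x : Module.End k V} (hxe : Commute x e) (p : Polynomial k) :
    Commute x (Polynomial.aeval e p) := by
  induction p using Polynomial.induction_on' with
  | add p q hp hq => simpa [map_add] using hp.add_right hq
  | monomial m a =>
    rw [Polynomial.aeval_monomial]
    exact (Algebra.commute_algebraMap_right a x).mul_right (hxe.pow_right m)

lemma map_biSup_mem {S : Set ℕ} {p : ℕ → Submodule k V} {M : Submodule k V}
    (x : Module.End k V) (hx : ∀ j ∈ S, ∀ v ∈ p j, x v ∈ M)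
    {u : V} (hu : u ∈ ⨆ j ∈ S, p j) : x u ∈ M := by
  have h : Submodule.map x (⨆ j ∈ S, p j) ≤ M := by
    rw [Submodule.map_iSup]
    refine iSup_le fun j => ?_
    rw [Submodule.map_iSup]
    refine iSup_le fun hj => ?_
    rintro _ ⟨v, hv, rfl⟩
    exact hx j hj v hv
  exact h (Submodule.mem_map_of_mem hu)

end Aux

/-- Bracket inclusions: `[𝔥,𝔥] = 0`, `[𝔥,𝔫₀] ⊆ 𝔫₀`, `[𝔥,𝔫₁] ⊆ 𝔫₁`, `[𝔫₀,𝔫₀] ⊆ 𝔥`,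
`[𝔫₀,𝔫₁] ⊆ 𝔫₁`; in particular `𝔥` is abelian. -/
theorem stmt4 (k : Type*) [Field k] [IsAlgClosed k] (hchar : (2 : k) ≠ 0)
    (V : Type*) [AddCommGroup V] [Module k V] [FiniteDimensional k V]
    (N : ℕ) (hN : 2 ≤ N) (hdim : Module.finrank k V = N)
    (ε : ℤ) (hε : ε = 1 ∨ ε = -1)
    (Ψ : V →ₗ[k] V →ₗ[k] k)
    (hsymm : ∀ u v : V, Ψ u v = (ε : k) * Ψ v u)
    (hnd : ∀ u : V, (∀ v : V, Ψ u v = 0) → u = 0)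
    (e : Module.End k V) (he_nil : IsNilpotent e)
    (he_skew : ∀ u v : V, Ψ (e u) v + Ψ u (e v) = 0)
    (n : ℕ) (lam : ℕ → ℕ)
    (hlam0 : lam 0 = 0)
    (hpos : ∀ i : ℕ, 1 ≤ i → i ≤ n → 1 ≤ lam i)
    (hmono : ∀ i : ℕ, 1 ≤ i → lam (i + 1) ≤ lam i)
    (htop : ∀ i : ℕ, n < i → lam i = 0)
    (hsum : ∑ i ∈ Finset.Icc 1 n, lam i = N)
    (hJordan : ∀ j : ℕ, 1 ≤ j →
      (((Finset.Icc 1 n).filter (fun i => j ≤ lam i)).card) =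
        Module.finrank k (LinearMap.ker (e ^ j)) -
          Module.finrank k (LinearMap.ker (e ^ (j - 1))))
    (w : ℕ → V) (σ : ℕ → ℕ)
    (hσ : ∀ i : ℕ, 1 ≤ i → i ≤ n → 1 ≤ σ i ∧ σ i ≤ n ∧ σ (σ i) = i)
    (hbasis_li : LinearIndependent k
      (fun p : {p : ℕ × ℕ // 1 ≤ p.1 ∧ p.1 ≤ n ∧ p.2 < lam p.1} =>
        (e ^ (p : ℕ × ℕ).2) (w (p : ℕ × ℕ).1)))
    (hbasis_span : Submodule.span k
      {v : V | ∃ i s : ℕ, 1 ≤ i ∧ i ≤ n ∧ s < lam i ∧ v = (e ^ s) (w i)} = ⊤)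
    (hσlam : ∀ i : ℕ, 1 ≤ i → i ≤ n → lam (σ i) = lam i)
    (horth : ∀ i j : ℕ, 1 ≤ i → i ≤ n → 1 ≤ j → j ≤ n → j ≠ σ i →
      ∀ u ∈ blockSpan k V e lam w i, ∀ x ∈ blockSpan k V e lam w j, Ψ u x = 0)
    (hfix : ∀ i : ℕ, 1 ≤ i → i ≤ n → (σ i = i ↔ ε * (-1 : ℤ) ^ lam i = -1)) :
    (∀ x ∈ hPart k V Ψ e lam w n, ∀ y ∈ hPart k V Ψ e lam w n,
        x * y - y * x = 0) ∧
      (∀ x ∈ hPart k V Ψ e lam w n, ∀ y ∈ n0Part k V Ψ e lam w σ n,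
        x * y - y * x ∈ n0Part k V Ψ e lam w σ n) ∧
      (∀ x ∈ hPart k V Ψ e lam w n, ∀ y ∈ n1Part k V Ψ e lam w σ n,
        x * y - y * x ∈ n1Part k V Ψ e lam w σ n) ∧
      (∀ x ∈ n0Part k V Ψ e lam w σ n, ∀ y ∈ n0Part k V Ψ e lam w σ n,
        x * y - y * x ∈ hPart k V Ψ e lam w n) ∧
      (∀ x ∈ n0Part k V Ψ e lam w σ n, ∀ y ∈ n1Part k V Ψ e lam w σ n,
        x * y - y * x ∈ n1Part k V Ψ e lam w σ n) := by
  set B := blockSpan k V e lam w with hB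
  -- Part 1
  have part1 : ∀ x ∈ hPart k V Ψ e lam w n, ∀ y ∈ hPart k V Ψ e lam w n,
      x * y - y * x = 0 := by
    intro x hx y hy
    obtain ⟨⟨_, hxe⟩, hxb⟩ := hx
    obtain ⟨⟨_, hye⟩, hyb⟩ := hy
    have hcz : Commute (x * y - y * x) e :=
      Commute.sub_left ((show Commute x e from hxe).mul_left hye)
        ((show Commute y e from hye).mul_left hxe)
    have zw : ∀ i : ℕ, 1 ≤ i → i ≤ n → 1 ≤ lam i → (x * y - y * x) (w i) = 0 := by
      intro i h1 h2 hli
      have hwi : w i ∈ B i := Submodule.subset_span ⟨0, hli, by simp⟩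
      obtain ⟨p, hp⟩ := mem_blockSpan_poly e lam w i (hxb i h1 h2 _ hwi)
      obtain ⟨q, hq⟩ := mem_blockSpan_poly e lam w i (hyb i h1 h2 _ hwi)
      have cxq : x * Polynomial.aeval e q = Polynomial.aeval e q * x :=
        commute_aeval hxe q
      have cyp : y * Polynomial.aeval e p = Polynomial.aeval e p * y :=
        commute_aeval hye p
      have e1 : x (y (w i)) = (Polynomial.aeval e q) ((Polynomial.aeval e p) (w i)) := by
        rw [hq]
        calc x ((Polynomial.aeval e q) (w i))
            = (x * Polynomial.aeval e q) (w i) := rfl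
          _ = (Polynomial.aeval e q * x) (w i) := by rw [cxq]
          _ = (Polynomial.aeval e q) (x (w i)) := rfl
          _ = (Polynomial.aeval e q) ((Polynomial.aeval e p) (w i)) := by rw [hp]
      have e2 : y (x (w i)) = (Polynomial.aeval e p) ((Polynomial.aeval e q) (w i)) := by
        rw [hp]
        calc y ((Polynomial.aeval e p) (w i))
            = (y * Polynomial.aeval e p) (w i) := rfl
          _ = (Polynomial.aeval e p * y) (w i) := by rw [cyp]
          _ = (Polynomial.aeval e p) (y (w i)) := rfl
          _ = (Polynomial.aeval e p) ((Polynomial.aeval e q) (w i)) := by rw [hq]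
      have e3 : (Polynomial.aeval e q) ((Polynomial.aeval e p) (w i))
          = (Polynomial.aeval e p) ((Polynomial.aeval e q) (w i)) := by
        show (Polynomial.aeval e q * Polynomial.aeval e p) (w i)
          = (Polynomial.aeval e p * Polynomial.aeval e q) (w i)
        rw [← map_mul, ← map_mul, mul_comm]
      simp only [LinearMap.sub_apply, Module.End.mul_apply]
      rw [e1, e2, e3, sub_self]
    apply LinearMap.ext
    intro v
    rw [LinearMap.zero_apply]
    have hv : v ∈ Submodule.span k
        {v : V | ∃ i s : ℕ, 1 ≤ i ∧ i ≤ n ∧ s < lam i ∧ v = (e ^ s) (w i)} := by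
      rw [hbasis_span]; trivial
    induction hv using Submodule.span_induction with
    | mem v hv =>
      obtain ⟨i, s, h1, h2, hs, rfl⟩ := hv
      have : (x * y - y * x) ((e ^ s) (w i)) = (e ^ s) ((x * y - y * x) (w i)) := by
        calc (x * y - y * x) ((e ^ s) (w i))
            = ((x * y - y * x) * e ^ s) (w i) := rfl
          _ = (e ^ s * (x * y - y * x)) (w i) := by rw [hcz.pow_right s]
          _ = (e ^ s) ((x * y - y * x) (w i)) := rfl
      rw [this, zw i h1 h2 (by omega), map_zero]
    | zero => simp
    | add a b _ _ ha hb => rw [map_add, ha, hb, add_zero]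
    | smul c a _ ha => rw [map_smul, ha, smul_zero]
  refine ⟨part1, ?_, ?_, ?_, ?_⟩
  -- Part 2 : [h, n0] ⊆ n0
  · intro x hx y hy
    obtain ⟨hxs, hxb⟩ := hx
    obtain ⟨hys, hyb⟩ := hy
    refine ⟨skew_bracket Ψ e hxs hys, ?_⟩
    intro i h1 h2
    obtain ⟨hσ1, hσ2, hσσ⟩ := hσ i h1 h2
    constructor
    · intro hne v hv
      have t1 : x (y v) ∈ B (σ i) :=
        hxb (σ i) hσ1 hσ2 _ ((hyb i h1 h2).1 hne v hv)
      have t2 : y (x v) ∈ B (σ i) :=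
        (hyb i h1 h2).1 hne _ (hxb i h1 h2 v hv)
      simpa only [LinearMap.sub_apply, Module.End.mul_apply] using sub_mem t1 t2
    · intro heq v hv
      have t1 : y v = 0 := (hyb i h1 h2).2 heq v hv
      have t2 : y (x v) = 0 := (hyb i h1 h2).2 heq _ (hxb i h1 h2 v hv)
      simp only [LinearMap.sub_apply, Module.End.mul_apply, t1, t2, map_zero, sub_zero]
  -- Part 3 : [h, n1] ⊆ n1
  · intro x hx y hy
    obtain ⟨hxs, hxb⟩ := hx
    obtain ⟨hys, hyb⟩ := hy
    refine ⟨skew_bracket Ψ e hxs hys, ?_⟩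
    intro i h1 h2 v hv
    have t1 : x (y v) ∈ ⨆ j ∈ {j : ℕ | 1 ≤ j ∧ j ≤ n ∧ j ≠ i ∧ j ≠ σ i}, B j := by
      refine map_biSup_mem x ?_ (hyb i h1 h2 v hv)
      intro j hj u hu
      exact Submodule.mem_iSup_of_mem j
        (Submodule.mem_iSup_of_mem hj (hxb j hj.1 hj.2.1 u hu))
    have t2 : y (x v) ∈ ⨆ j ∈ {j : ℕ | 1 ≤ j ∧ j ≤ n ∧ j ≠ i ∧ j ≠ σ i}, B j :=
      hyb i h1 h2 _ (hxb i h1 h2 v hv)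
    simpa only [LinearMap.sub_apply, Module.End.mul_apply] using sub_mem t1 t2
  -- Part 4 : [n0, n0] ⊆ h
  · intro x hx y hy
    obtain ⟨hxs, hxb⟩ := hx
    obtain ⟨hys, hyb⟩ := hy
    refine ⟨skew_bracket Ψ e hxs hys, ?_⟩
    intro i h1 h2 v hv
    obtain ⟨hσ1, hσ2, hσσ⟩ := hσ i h1 h2
    by_cases hne : σ i = i
    · have t1 : y v = 0 := (hyb i h1 h2).2 hne v hv
      have t2 : x v = 0 := (hxb i h1 h2).2 hne v hv
      simp only [LinearMap.sub_apply, Module.End.mul_apply, t1, t2, map_zero, sub_zero]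
      exact zero_mem _
    · have hne2 : σ (σ i) ≠ σ i := by rw [hσσ]; exact fun h => hne h.symm
      have t1 : x (y v) ∈ B i := by
        have := (hxb (σ i) hσ1 hσ2).1 hne2 _ ((hyb i h1 h2).1 hne v hv)
        rwa [hσσ] at this
      have t2 : y (x v) ∈ B i := by
        have := (hyb (σ i) hσ1 hσ2).1 hne2 _ ((hxb i h1 h2).1 hne v hv)
        rwa [hσσ] at this
      simpa only [LinearMap.sub_apply, Module.End.mul_apply] using sub_mem t1 t2
  -- Part 5 : [n0, n1] ⊆ n1
  · intro x hx y hy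
    obtain ⟨hxs, hxb⟩ := hx
    obtain ⟨hys, hyb⟩ := hy
    refine ⟨skew_bracket Ψ e hxs hys, ?_⟩
    intro i h1 h2 v hv
    obtain ⟨hσ1, hσ2, hσσ⟩ := hσ i h1 h2
    have t1 : x (y v) ∈ ⨆ j ∈ {j : ℕ | 1 ≤ j ∧ j ≤ n ∧ j ≠ i ∧ j ≠ σ i}, B j := by
      refine map_biSup_mem x ?_ (hyb i h1 h2 v hv)
      intro j hj u hu
      obtain ⟨hj1, hj2, hj3, hj4⟩ := hj
      obtain ⟨hjσ1, hjσ2, hjσσ⟩ := hσ j hj1 hj2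
      by_cases hfj : σ j = j
      · have : x u = 0 := (hxb j hj1 hj2).2 hfj u hu
        rw [this]; exact zero_mem _
      · have hxin : x u ∈ B (σ j) := (hxb j hj1 hj2).1 hfj u hu
        have hne2 : σ j ≠ σ i := fun h => by
          have : j = i := by rw [← hjσσ, h, hσσ]
          exact hj3 this
        have hne1' : σ j ≠ i := by
          intro h
          apply hj4
          rw [← h]
          exact hjσσ.symm
        exact Submodule.mem_iSup_of_mem (σ j)
          (Submodule.mem_iSup_of_mem ⟨hjσ1, hjσ2, hne1', hne2⟩ hxin)
    have t2 : y (x v) ∈ ⨆ j ∈ {j : ℕ | 1 ≤ j ∧ j ≤ n ∧ j ≠ i ∧ j ≠ σ i}, B j := by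
      by_cases hfi : σ i = i
      · have : x v = 0 := (hxb i h1 h2).2 hfi v hv
        rw [this, map_zero]; exact zero_mem _
      · have hxv : x v ∈ B (σ i) := (hxb i h1 h2).1 hfi v hv
        have hmem := hyb (σ i) hσ1 hσ2 _ hxv
        have hle : (⨆ j ∈ {j : ℕ | 1 ≤ j ∧ j ≤ n ∧ j ≠ σ i ∧ j ≠ σ (σ i)}, B j)
            ≤ ⨆ j ∈ {j : ℕ | 1 ≤ j ∧ j ≤ n ∧ j ≠ i ∧ j ≠ σ i}, B j := by
          refine iSup₂_le fun j hj => ?_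
          obtain ⟨a1, a2, a3, a4⟩ := hj
          rw [hσσ] at a4
          exact le_iSup₂_of_le j ⟨a1, a2, a4, a3⟩ le_rfl
        exact hle hmem
    simpa only [LinearMap.sub_apply, Module.End.mul_apply] using sub_mem t1 t2
end

section
/- Let λ ∈ P_ε(N) and suppose Case 2 of the Kempken–Spaltenstein algorithm occurs for λ at index i, i.e. (i,i+1) ∈ Δ(λ) and λ_i = λ_{i+1}. Then Δ(λ^{(i)}) = Δ(λ) \ {(i,i+1)}. Furthermore, if (i,i+1) is a good 2-step of λ, then s(λ^{(i)}) = s(λ). -/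
open Finset

/-- The badness condition for a 2-step `(i, i+1)`. -/
def IsBadStep (lam : ℕ → ℕ) (i : ℕ) : Prop :=
  (1 < i ∧ Even (lam (i - 1) - lam i)) ∨ Even (lam (i + 1) - lam (i + 2))

/-- `Δ_bad(λ)`, the set of bad 2-steps of `lam`. -/
def badSteps (ε : ℤ) (lam : ℕ → ℕ) : Set ℕ :=
  {i | IsTwoStep ε lam i ∧ IsBadStep lam i}

/-- `lam` is non-singular: it has no bad 2-step. -/
def NonSingular (ε : ℤ) (lam : ℕ → ℕ) : Prop :=
  ∀ i : ℕ, IsTwoStep ε lam i → ¬ IsBadStep lam i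

/-- The 2-cluster `a, a+2, …, a+2(k−1)` (with `k ≥ 2` members) of `lam`. -/
def IsTwoCluster (ε : ℤ) (lam : ℕ → ℕ) (a k : ℕ) : Prop :=
  2 ≤ k ∧ ∀ j : ℕ, j < k → IsTwoStep ε lam (a + 2 * j)

/-- The 2-cluster `a, a+2, …, a+2(k−1)` has a bad boundary. -/
def HasBadBoundary (lam : ℕ → ℕ) (a k : ℕ) : Prop :=
  (1 < a ∧ 0 < lam (a - 1) - lam a ∧ Even (lam (a - 1) - lam a)) ∨
  (0 < lam (a + 2 * (k - 1) + 1) - lam (a + 2 * (k - 1) + 2) ∧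
    Even (lam (a + 2 * (k - 1) + 1) - lam (a + 2 * (k - 1) + 2)))

/-- `Σ(λ)`: the set of good 2-clusters of `lam`, a cluster being recorded as the pair
`(a, k)` of its first index and its number of members. -/
def goodClusters (ε : ℤ) (lam : ℕ → ℕ) : Set (ℕ × ℕ) :=
  {p | IsTwoCluster ε lam p.1 p.2 ∧ ¬ HasBadBoundary lam p.1 p.2}

/-- `z(λ) = s(λ) + |Δ(λ)| − (|Δ_bad(λ)| − |Σ(λ)|)`, computed in `ℤ`. -/
noncomputable def zVal (ε : ℤ) (lam : ℕ → ℕ) (n : ℕ) : ℤ :=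
  (sVal lam n : ℤ) + ((twoSteps ε lam).ncard : ℤ) + ((goodClusters ε lam).ncard : ℤ)
    - ((badSteps ε lam).ncard : ℤ)

/-- One step of the Kempken–Spaltenstein algorithm at index `i`
(Case 1 if `λ_i − λ_{i+1} ≥ 2`, Case 2 otherwise). -/
def ksOut (lam : ℕ → ℕ) (i : ℕ) : ℕ → ℕ := fun j =>
  if lam (i + 1) + 2 ≤ lam i then (if j ≤ i then lam j - 2 else lam j)
  else (if j < i then lam j - 2 else if j ≤ i + 1 then lam j - 1 else lam j)

/-- The index `i` is admissible for `lam` (Case 1 or Case 2 occurs at `i`). -/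
def IsAdmissibleIndex (ε : ℤ) (lam : ℕ → ℕ) (i : ℕ) : Prop :=
  (1 ≤ i ∧ lam (i + 1) + 2 ≤ lam i) ∨ (IsTwoStep ε lam i ∧ lam i = lam (i + 1))

/-- `λ^𝐢`: the result of applying the KS algorithm along the sequence `𝐢`. -/
def ksApply (lam : ℕ → ℕ) : List ℕ → ℕ → ℕ
  | [] => lam
  | i :: rest => ksApply (ksOut lam i) rest

/-- The sequence `𝐢` is admissible for `lam`. -/
def IsAdmissibleSeq (ε : ℤ) (lam : ℕ → ℕ) : List ℕ → Prop
  | [] => True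
  | i :: rest => IsAdmissibleIndex ε lam i ∧ IsAdmissibleSeq ε (ksOut lam i) rest

/-- The sequence `𝐢` is maximal admissible for `lam`. -/
def IsMaximalAdmissibleSeq (ε : ℤ) (lam : ℕ → ℕ) (l : List ℕ) : Prop :=
  IsAdmissibleSeq ε lam l ∧ ∀ i : ℕ, ¬ IsAdmissibleIndex ε (ksApply lam l) i

/-- `lam` is a rigid partition. -/
def IsRigid (ε : ℤ) (lam : ℕ → ℕ) : Prop :=
  (∀ i : ℕ, 1 ≤ i → lam i ≤ lam (i + 1) + 1) ∧
  ∀ i : ℕ, ¬ (IsTwoStep ε lam i ∧ lam i = lam (i + 1))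

private lemma pcongr (ε : ℤ) {a b : ℕ} (h : a % 2 = b % 2) :
    ε * (-1 : ℤ) ^ a = ε * (-1 : ℤ) ^ b := by
  have h2 : ((-1 : ℤ)) ^ a = (-1 : ℤ) ^ b := by
    conv_lhs => rw [← Nat.div_add_mod a 2]
    conv_rhs => rw [← Nat.div_add_mod b 2]
    rw [pow_add, pow_add, pow_mul, pow_mul, h]
    norm_num
  rw [h2]

private lemma par_eq (ε : ℤ) (hε : ε = 1 ∨ ε = -1) {a b : ℕ}
    (ha : ε * (-1 : ℤ) ^ a = -1) (hb : ε * (-1 : ℤ) ^ b = -1) : a % 2 = b % 2 := by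
  rcases Nat.even_or_odd a with h1 | h1 <;> rcases Nat.even_or_odd b with h2 | h2
  · simp [Nat.even_iff] at h1 h2; omega
  · rw [h1.neg_one_pow] at ha; rw [h2.neg_one_pow] at hb
    rcases hε with rfl | rfl <;> simp at ha hb
  · rw [h1.neg_one_pow] at ha; rw [h2.neg_one_pow] at hb
    rcases hε with rfl | rfl <;> simp at ha hb
  · simp [Nat.odd_iff] at h1 h2; omega

private lemma eflip (ε : ℤ) {a : ℕ} (h1 : 1 ≤ a) (h : ε * (-1 : ℤ) ^ a = -1) :
    ε * (-1 : ℤ) ^ (a - 1) = 1 := by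
  rw [show a = (a - 1) + 1 by omega, pow_succ] at h
  linear_combination -h

/-- If Case 2 of the KS algorithm occurs for `λ ∈ 𝒫_ε(N)` at index `i`, then
`Δ(λ^{(i)}) = Δ(λ) \ {(i,i+1)}`; moreover if `(i,i+1)` is a good 2-step of `λ`
then `s(λ^{(i)}) = s(λ)`. -/
theorem stmt5 (ε : ℤ) (hε : ε = 1 ∨ ε = -1) (N n : ℕ) (lam : ℕ → ℕ)
    (hlam : KSPartition ε N n lam) (i : ℕ)
    (hstep : IsTwoStep ε lam i) (heq : lam i = lam (i + 1)) :
    twoSteps ε (ksOut lam i) = twoSteps ε lam \ {i} ∧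
      (¬ IsBadStep lam i → sVal (ksOut lam i) n = sVal lam n) := by
  obtain ⟨hi1, hpos1, hle, hpi, hpi1, hnel, hner⟩ := hstep
  have hz : lam 0 = 0 := hlam.zero
  have hli : 1 ≤ lam i := by omega
  have hcase : ¬ (lam (i + 1) + 2 ≤ lam i) := by omega
  have hμlt : ∀ j, j < i → ksOut lam i j = lam j - 2 := fun j hj => by
    simp [ksOut, hcase, hj]
  have hμi : ksOut lam i i = lam i - 1 := by simp [ksOut, hcase]
  have hμi1 : ksOut lam i (i + 1) = lam (i + 1) - 1 := by simp [ksOut, hcase]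
  have hμgt : ∀ j, i + 2 ≤ j → ksOut lam i j = lam j := fun j hj => by
    simp [ksOut, hcase, show ¬ j < i by omega, show ¬ j ≤ i + 1 by omega]
  have hmono : ∀ a b : ℕ, 1 ≤ a → a ≤ b → lam b ≤ lam a := by
    intro a b ha hab
    induction b, hab using Nat.le_induction with
    | base => exact le_rfl
    | succ b hb ih => exact (hlam.mono b (by omega)).trans ih
  have hgtr : lam (i + 2) < lam (i + 1) :=
    lt_of_le_of_ne (hmono (i + 1) (i + 2) (by omega) (by omega)) (Ne.symm hner)
  have hgtl : 2 ≤ i → lam i < lam (i - 1) := fun h2 =>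
    lt_of_le_of_ne (hmono (i - 1) i (by omega) (by omega)) (Ne.symm hnel)
  have hge2 : ∀ k, 1 ≤ k → k < i → 2 ≤ lam k := by
    intro k h1 h2
    have := hmono k (i - 1) h1 (by omega)
    have := hgtl (by omega)
    omega
  have hflipi : ε * (-1 : ℤ) ^ (lam i - 1) = 1 := eflip ε hli hpi
  have hflipi1 : ε * (-1 : ℤ) ^ (lam (i + 1) - 1) = 1 := eflip ε hpos1 hpi1
  have key : ∀ j : ℕ, IsTwoStep ε (ksOut lam i) j ↔ IsTwoStep ε lam j ∧ j ≠ i := by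
    intro j
    unfold IsTwoStep
    by_cases hj0 : j = 0
    · subst hj0; simp
    have hj1 : 1 ≤ j := by omega
    by_cases hA : j + 2 < i
    · rw [hμlt (j - 1) (by omega), hμlt j (by omega), hμlt (j + 1) (by omega),
        hμlt (j + 2) (by omega)]
      have m1 : lam (j + 1) ≤ lam j := hlam.mono j hj1
      have m2 : lam (j + 2) ≤ lam (j + 1) := hlam.mono (j + 1) (by omega)
      have m3 : 2 ≤ lam (j + 2) := hge2 (j + 2) (by omega) (by omega)
      have hconn : (j = 1 ∧ lam (j - 1) = 0) ∨ (2 ≤ j ∧ lam j ≤ lam (j - 1)) := by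
        rcases Nat.lt_or_ge j 2 with h | h
        · exact Or.inl ⟨by omega, by rw [show j - 1 = 0 by omega]; exact hz⟩
        · exact Or.inr ⟨h, hmono (j - 1) j (by omega) (by omega)⟩
      constructor
      · rintro ⟨c1, c2, c3, c4, c5, c6, c7⟩
        have h5 : 3 ≤ lam (j + 1) := by omega
        refine ⟨⟨c1, by omega, m1,
          by rw [pcongr ε (show lam j % 2 = (lam j - 2) % 2 by omega)]; exact c4,
          by rw [pcongr ε (show lam (j + 1) % 2 = (lam (j + 1) - 2) % 2 by omega)]; exact c5,
          by omega, by omega⟩, by omega⟩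
      · rintro ⟨⟨c1, c2, c3, c4, c5, c6, c7⟩, -⟩
        have h5 : 3 ≤ lam (j + 1) := by omega
        refine ⟨c1, by omega, by omega,
          by rw [pcongr ε (show (lam j - 2) % 2 = lam j % 2 by omega)]; exact c4,
          by rw [pcongr ε (show (lam (j + 1) - 2) % 2 = lam (j + 1) % 2 by omega)]; exact c5,
          by omega, by omega⟩
    by_cases hB : j + 2 = i
    · rw [hμlt (j - 1) (by omega), hμlt j (by omega), hμlt (j + 1) (by omega),
        show j + 2 = i from hB, hμi]
      have b1 : lam (j + 2) = lam i := by rw [hB]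
      have b2 : lam (j + 1) = lam (i - 1) := by rw [show j + 1 = i - 1 by omega]
      have m1 : lam (j + 1) ≤ lam j := hlam.mono j hj1
      have m2 : lam i < lam (j + 1) := by rw [b2]; exact hgtl (by omega)
      have hconn : (j = 1 ∧ lam (j - 1) = 0) ∨ (2 ≤ j ∧ lam j ≤ lam (j - 1)) := by
        rcases Nat.lt_or_ge j 2 with h | h
        · exact Or.inl ⟨by omega, by rw [show j - 1 = 0 by omega]; exact hz⟩
        · exact Or.inr ⟨h, hmono (j - 1) j (by omega) (by omega)⟩
      constructor
      · rintro ⟨c1, c2, c3, c4, c5, c6, c7⟩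
        have h5 : 3 ≤ lam (j + 1) := by omega
        refine ⟨⟨c1, by omega, m1,
          by rw [pcongr ε (show lam j % 2 = (lam j - 2) % 2 by omega)]; exact c4,
          by rw [pcongr ε (show lam (j + 1) % 2 = (lam (j + 1) - 2) % 2 by omega)]; exact c5,
          by omega, by omega⟩, by omega⟩
      · rintro ⟨⟨c1, c2, c3, c4, c5, c6, c7⟩, -⟩
        have hp : lam (j + 1) % 2 = lam i % 2 := par_eq ε hε c5 hpi
        have h5 : 3 ≤ lam (j + 1) := by omega
        refine ⟨c1, by omega, by omega,
          by rw [pcongr ε (show (lam j - 2) % 2 = lam j % 2 by omega)]; exact c4,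
          by rw [pcongr ε (show (lam (j + 1) - 2) % 2 = lam (j + 1) % 2 by omega)]; exact c5,
          by omega, by omega⟩
    by_cases hC : j + 1 = i
    · constructor
      · rintro ⟨c1, c2, c3, c4, c5, c6, c7⟩
        rw [show j + 1 = i from hC, hμi, hflipi] at c5
        norm_num at c5
      · rintro ⟨⟨c1, c2, c3, c4, c5, c6, c7⟩, -⟩
        rw [show j + 2 = i + 1 by omega, show j + 1 = i from hC] at c7
        exact absurd heq c7
    by_cases hD : j = i
    · subst hD
      constructor
      · rintro ⟨c1, c2, c3, c4, c5, c6, c7⟩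
        rw [hμi, hflipi] at c4
        norm_num at c4
      · rintro ⟨-, hne⟩
        exact absurd rfl hne
    by_cases hE : j = i + 1
    · subst hE
      constructor
      · rintro ⟨c1, c2, c3, c4, c5, c6, c7⟩
        rw [hμi1, hflipi1] at c4
        norm_num at c4
      · rintro ⟨⟨c1, c2, c3, c4, c5, c6, c7⟩, -⟩
        rw [show i + 1 - 1 = i by omega] at c6
        exact absurd heq c6
    by_cases hF : j = i + 2
    · subst hF
      rw [show i + 2 - 1 = i + 1 by omega, hμi1, hμgt (i + 2) le_rfl,
        hμgt (i + 2 + 1) (by omega), hμgt (i + 2 + 2) (by omega)]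
      constructor
      · rintro ⟨c1, c2, c3, c4, c5, c6, c7⟩
        exact ⟨⟨c1, c2, c3, c4, c5, hner, c7⟩, by omega⟩
      · rintro ⟨⟨c1, c2, c3, c4, c5, c6, c7⟩, -⟩
        have hp : lam (i + 2) % 2 = lam (i + 1) % 2 := par_eq ε hε c4 hpi1
        exact ⟨c1, c2, c3, c4, c5, by omega, c7⟩
    · rw [hμgt (j - 1) (by omega), hμgt j (by omega), hμgt (j + 1) (by omega),
        hμgt (j + 2) (by omega)]
      exact ⟨fun h => ⟨h, by omega⟩, fun h => h.1⟩
  have hsum : ¬ IsBadStep lam i → sVal (ksOut lam i) n = sVal lam n := by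
    intro hgood
    have hg1 : 1 < i → (lam (i - 1) - lam i) % 2 = 1 := by
      intro h
      rcases Nat.even_or_odd (lam (i - 1) - lam i) with he | ho
      · exact absurd (Or.inl ⟨h, he⟩) hgood
      · exact Nat.odd_iff.mp ho
    have hg2 : (lam (i + 1) - lam (i + 2)) % 2 = 1 := by
      rcases Nat.even_or_odd (lam (i + 1) - lam (i + 2)) with he | ho
      · exact absurd (Or.inr he) hgood
      · exact Nat.odd_iff.mp ho
    unfold sVal
    apply Finset.sum_congr rfl
    intro j hj
    simp only [Finset.mem_Icc] at hj
    by_cases h1 : j + 1 < i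
    · rw [hμlt j (by omega), hμlt (j + 1) (by omega)]
      have := hge2 (j + 1) (by omega) (by omega)
      have := hlam.mono j (by omega)
      omega
    by_cases h2 : j + 1 = i
    · rw [show j + 1 = i from h2, hμi, show j = i - 1 by omega,
        hμlt (i - 1) (by omega)]
      have hh := hg1 (by omega)
      have := hgtl (by omega)
      omega
    by_cases h3 : j = i
    · subst h3
      rw [hμi, hμi1]
      omega
    by_cases h4 : j = i + 1
    · subst h4
      rw [hμi1, hμgt (i + 1 + 1) (by omega)]
      have : lam (i + 1 + 1) = lam (i + 2) := by norm_num
      omega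
    · rw [hμgt j (by omega), hμgt (j + 1) (by omega)]
  refine ⟨?_, hsum⟩
  ext j
  simp only [twoSteps, Set.mem_setOf_eq, Set.mem_diff, Set.mem_singleton_iff]
  exact key j
end

section
/- If 𝐢 is an admissible sequence for λ ∈ P_ε(N), then Δ(λ^𝐢) ⊆ Δ(λ). -/
open Finset

lemma parity_sub_two (ε : ℤ) {a : ℕ} (ha : 2 ≤ a)
    (h : ε * (-1:ℤ)^(a-2) = -1) : ε * (-1:ℤ)^a = -1 := by
  rw [show a = (a-2)+2 from by omega, pow_add]
  linear_combination h

lemma parity_sub_one (ε : ℤ) {a : ℕ} (ha : 1 ≤ a)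
    (h : ε * (-1:ℤ)^a = -1) : ε * (-1:ℤ)^(a-1) = 1 := by
  rw [show a = (a-1)+1 from by omega, pow_add] at h
  linear_combination -h

lemma ksOut_eq1 (lam : ℕ → ℕ) (i j : ℕ) (hC : lam (i+1) + 2 ≤ lam i) (h : j ≤ i) :
    ksOut lam i j = lam j - 2 := by simp [ksOut, hC, h]

lemma ksOut_eq2 (lam : ℕ → ℕ) (i j : ℕ) (hC : lam (i+1) + 2 ≤ lam i) (h : ¬ j ≤ i) :
    ksOut lam i j = lam j := by simp [ksOut, hC, h]

lemma ksOut_eq3 (lam : ℕ → ℕ) (i j : ℕ) (hC : ¬ lam (i+1) + 2 ≤ lam i) (h : j < i) :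
    ksOut lam i j = lam j - 2 := by simp [ksOut, hC, h]

lemma ksOut_eq4 (lam : ℕ → ℕ) (i j : ℕ) (hC : ¬ lam (i+1) + 2 ≤ lam i) (h1 : ¬ j < i)
    (h2 : j ≤ i+1) : ksOut lam i j = lam j - 1 := by simp [ksOut, hC, h1, h2]

lemma ksOut_eq5 (lam : ℕ → ℕ) (i j : ℕ) (hC : ¬ lam (i+1) + 2 ≤ lam i) (h : ¬ j ≤ i+1) :
    ksOut lam i j = lam j := by
  have h1 : ¬ j < i := by omega
  simp [ksOut, hC, h1, h]

lemma step_subset (ε : ℤ) (lam : ℕ → ℕ)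
    (hmono : ∀ j, 1 ≤ j → lam (j+1) ≤ lam j)
    (i : ℕ) (hadm : IsAdmissibleIndex ε lam i) :
    twoSteps ε (ksOut lam i) ⊆ twoSteps ε lam := by
  intro t ht
  obtain ⟨ht1, htpos, htle, hpt, hpt1, hne1, hne2⟩ := ht
  have hmt := hmono t ht1
  by_cases hC : lam (i+1) + 2 ≤ lam i
  · -- Case 1
    by_cases h1 : t + 2 ≤ i
    · simp only [ksOut_eq1 lam i (t+1) hC (by omega), ksOut_eq1 lam i t hC (by omega),
        ksOut_eq1 lam i (t-1) hC (by omega), ksOut_eq1 lam i (t+2) hC (by omega)]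
        at htpos htle hpt hpt1 hne1 hne2
      exact ⟨ht1, by omega, hmt, parity_sub_two ε (by omega) hpt,
        parity_sub_two ε (by omega) hpt1, by omega, by omega⟩
    · by_cases h2 : t + 1 ≤ i
      · -- i = t+1
        obtain rfl : i = t + 1 := by omega
        have hC' : lam (t+2) + 2 ≤ lam (t+1) := hC
        simp only [ksOut_eq1 lam (t+1) (t+1) hC (by omega), ksOut_eq1 lam (t+1) t hC (by omega),
          ksOut_eq1 lam (t+1) (t-1) hC (by omega), ksOut_eq2 lam (t+1) (t+2) hC (by omega)]
          at htpos htle hpt hpt1 hne1 hne2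
        exact ⟨ht1, by omega, hmt, parity_sub_two ε (by omega) hpt,
          parity_sub_two ε (by omega) hpt1, by omega, by omega⟩
      · by_cases h3 : t ≤ i
        · -- i = t
          have hit : i = t := by omega
          subst hit
          simp only [ksOut_eq1 lam i i hC (by omega), ksOut_eq1 lam i (i-1) hC (by omega),
            ksOut_eq2 lam i (i+1) hC (by omega), ksOut_eq2 lam i (i+2) hC (by omega)]
            at htpos htle hpt hpt1 hne1 hne2
          exact ⟨ht1, htpos, hmt, parity_sub_two ε (by omega) hpt, hpt1, by omega, hne2⟩
        · by_cases h4 : i + 1 = t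
          · -- i = t - 1
            obtain rfl : t = i + 1 := by omega
            simp only [ksOut_eq1 lam i i hC (by omega),
              ksOut_eq2 lam i (i+1) hC (by omega), ksOut_eq2 lam i (i+1+1) hC (by omega),
              ksOut_eq2 lam i (i+1+2) hC (by omega)]
              at htpos htle hpt hpt1 hne1 hne2
            have : lam (i+1) ≤ lam i - 2 := by omega
            refine ⟨ht1, htpos, hmt, hpt, hpt1, ?_, hne2⟩
            simpa using (by omega : lam i ≠ lam (i+1))
          · simp only [ksOut_eq2 lam i (t+1) hC (by omega), ksOut_eq2 lam i t hC (by omega),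
              ksOut_eq2 lam i (t-1) hC (by omega), ksOut_eq2 lam i (t+2) hC (by omega)]
              at htpos htle hpt hpt1 hne1 hne2
            exact ⟨ht1, htpos, hmt, hpt, hpt1, hne1, hne2⟩
  · -- Case 2
    have hstep : IsTwoStep ε lam i ∧ lam i = lam (i+1) := by
      rcases hadm with ⟨_, h⟩ | h
      · omega
      · exact h
    obtain ⟨⟨hi1, hip, hile, hpi, hpi1, hnei1, hnei2⟩, heq⟩ := hstep
    have hti : t ≠ i := by
      intro h; subst h
      rw [ksOut_eq4 lam t t hC (by omega) (by omega)] at hpt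
      rw [parity_sub_one ε (by omega) hpi] at hpt
      norm_num at hpt
    have ht1i : t + 1 ≠ i := by
      intro h
      rw [show t + 1 = i from h, ksOut_eq4 lam i i hC (by omega) (by omega)] at hpt1
      rw [parity_sub_one ε (by omega) hpi] at hpt1
      norm_num at hpt1
    have hti1 : t ≠ i + 1 := by
      intro h; subst h
      rw [ksOut_eq4 lam i (i+1) hC (by omega) (by omega)] at hpt
      rw [parity_sub_one ε (by omega) hpi1] at hpt
      norm_num at hpt
    have hcases : t + 2 ≤ i ∨ i + 2 ≤ t := by omega
    rcases hcases with hc | hc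
    · by_cases h5 : t + 2 < i
      · simp only [ksOut_eq3 lam i (t+1) hC (by omega), ksOut_eq3 lam i t hC (by omega),
          ksOut_eq3 lam i (t-1) hC (by omega), ksOut_eq3 lam i (t+2) hC (by omega)]
          at htpos htle hpt hpt1 hne1 hne2
        exact ⟨ht1, by omega, hmt, parity_sub_two ε (by omega) hpt,
          parity_sub_two ε (by omega) hpt1, by omega, by omega⟩
      · -- t + 2 = i
        obtain rfl : i = t + 2 := by omega
        simp only [ksOut_eq3 lam (t+2) (t+1) hC (by omega), ksOut_eq3 lam (t+2) t hC (by omega),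
          ksOut_eq3 lam (t+2) (t-1) hC (by omega)]
          at htpos htle hpt hpt1 hne1 hne2
        refine ⟨ht1, by omega, hmt, parity_sub_two ε (by omega) hpt,
          parity_sub_two ε (by omega) hpt1, by omega, ?_⟩
        simpa using hnei1
    · by_cases h6 : i + 2 < t
      · simp only [ksOut_eq5 lam i (t+1) hC (by omega), ksOut_eq5 lam i t hC (by omega),
          ksOut_eq5 lam i (t-1) hC (by omega), ksOut_eq5 lam i (t+2) hC (by omega)]
          at htpos htle hpt hpt1 hne1 hne2
        exact ⟨ht1, htpos, hmt, hpt, hpt1, hne1, hne2⟩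
      · -- t = i + 2
        obtain rfl : t = i + 2 := by omega
        simp only [ksOut_eq5 lam i (i+2+1) hC (by omega), ksOut_eq5 lam i (i+2) hC (by omega),
          ksOut_eq5 lam i (i+2+2) hC (by omega)]
          at htpos htle hpt hpt1 hne1 hne2
        refine ⟨ht1, htpos, hmt, hpt, hpt1, ?_, hne2⟩
        simpa using hnei2

lemma step_mono (ε : ℤ) (lam : ℕ → ℕ)
    (hmono : ∀ j, 1 ≤ j → lam (j+1) ≤ lam j)
    (i : ℕ) (hadm : IsAdmissibleIndex ε lam i) :
    ∀ j, 1 ≤ j → ksOut lam i (j+1) ≤ ksOut lam i j := by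
  intro j hj
  have hmj := hmono j hj
  by_cases hC : lam (i+1) + 2 ≤ lam i
  · rcases lt_trichotomy j i with h | h | h
    · rw [ksOut_eq1 lam i (j+1) hC (by omega), ksOut_eq1 lam i j hC (by omega)]; omega
    · subst h
      rw [ksOut_eq2 lam j (j+1) hC (by omega), ksOut_eq1 lam j j hC (by omega)]; omega
    · rw [ksOut_eq2 lam i (j+1) hC (by omega), ksOut_eq2 lam i j hC (by omega)]; omega
  · have hstep : IsTwoStep ε lam i ∧ lam i = lam (i+1) := by
      rcases hadm with ⟨_, h⟩ | h
      · omega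
      · exact h
    obtain ⟨⟨hi1, hip, hile, hpi, hpi1, hnei1, hnei2⟩, heq⟩ := hstep
    rcases (by omega : j + 1 < i ∨ j + 1 = i ∨ j = i ∨ j = i + 1 ∨ i + 1 < j) with
      h | h | h | h | h
    · rw [ksOut_eq3 lam i (j+1) hC (by omega), ksOut_eq3 lam i j hC (by omega)]; omega
    · -- j + 1 = i, so i ≥ 2
      have hmi : lam i ≤ lam (i-1) := by
        have := hmono (i-1) (by omega)
        rwa [show i - 1 + 1 = i from by omega] at this
      have hne : lam (i-1) ≠ lam i := hnei1
      rw [show j + 1 = i from h, ksOut_eq4 lam i i hC (by omega) (by omega),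
        ksOut_eq3 lam i j hC (by omega), show j = i - 1 from by omega]
      omega
    · subst h
      rw [ksOut_eq4 lam j (j+1) hC (by omega) (by omega),
        ksOut_eq4 lam j j hC (by omega) (by omega)]
      omega
    · subst h
      rw [ksOut_eq5 lam i (i+1+1) hC (by omega), ksOut_eq4 lam i (i+1) hC (by omega) (by omega)]
      have h1 := hmono (i+1) (by omega)
      have h2 : lam (i+1) ≠ lam (i+1+1) := hnei2
      omega
    · rw [ksOut_eq5 lam i (j+1) hC (by omega), ksOut_eq5 lam i j hC (by omega)]; omega

lemma main_aux (ε : ℤ) : ∀ (l : List ℕ) (lam : ℕ → ℕ),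
    (∀ j, 1 ≤ j → lam (j+1) ≤ lam j) → IsAdmissibleSeq ε lam l →
    twoSteps ε (ksApply lam l) ⊆ twoSteps ε lam
  | [], lam, _, _ => fun _ h => h
  | i :: rest, lam, hmono, ⟨hi, hrest⟩ =>
    (main_aux ε rest (ksOut lam i) (step_mono ε lam hmono i hi) hrest).trans
      (step_subset ε lam hmono i hi)

/-- If `𝐢` is an admissible sequence for `λ ∈ 𝒫_ε(N)`, then `Δ(λ^𝐢) ⊆ Δ(λ)`. -/
theorem stmt6 (ε : ℤ) (hε : ε = 1 ∨ ε = -1) (N n : ℕ) (lam : ℕ → ℕ)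
    (hlam : KSPartition ε N n lam) (l : List ℕ)
    (hl : IsAdmissibleSeq ε lam l) :
    twoSteps ε (ksApply lam l) ⊆ twoSteps ε lam :=
  main_aux ε l lam hlam.mono hl
end

section
/- If (i,i+1) is a good 2-step of λ ∈ P_ε(N), 𝐢 is an admissible sequence for λ, and (i,i+1) ∈ Δ(λ^𝐢), then (i,i+1) is a good 2-step of λ^𝐢. -/
open Finset

/-! ### Auxiliary lemmas for `stmt7` -/

lemma ks_pow_mod (a : ℕ) : ((-1:ℤ))^a = (-1:ℤ)^(a % 2) := by
  conv_lhs => rw [← Nat.div_add_mod a 2]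
  rw [pow_add, pow_mul]
  norm_num

lemma ks_sign_succ (ε : ℤ) (a : ℕ) : ε * (-1:ℤ)^(a+1) = -(ε * (-1:ℤ)^a) := by
  rw [pow_succ]; ring

lemma ks_sign_cases (ε : ℤ) (hε : ε = 1 ∨ ε = -1) (a : ℕ) :
    ε * (-1:ℤ)^a = 1 ∨ ε * (-1:ℤ)^a = -1 := by
  rw [ks_pow_mod]
  rcases hε with h | h <;> subst h <;>
    rcases Nat.mod_two_eq_zero_or_one a with h | h <;> rw [h] <;> decide

lemma ks_sign_iff (ε : ℤ) (hε : ε = 1 ∨ ε = -1) (a b : ℕ) :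
    ε * (-1:ℤ)^a = ε * (-1:ℤ)^b ↔ a % 2 = b % 2 := by
  rw [ks_pow_mod a, ks_pow_mod b]
  rcases hε with h | h <;> subst h <;>
    rcases Nat.mod_two_eq_zero_or_one a with ha | ha <;>
    rcases Nat.mod_two_eq_zero_or_one b with hb | hb <;>
    rw [ha, hb] <;> decide

/-- A convenient "niceness" predicate: first part is `0` and parts are weakly decreasing. -/
def KSNice (lam : ℕ → ℕ) : Prop := lam 0 = 0 ∧ ∀ k : ℕ, 1 ≤ k → lam (k+1) ≤ lam k

lemma ks_chain (lam : ℕ → ℕ) (hm : ∀ k : ℕ, 1 ≤ k → lam (k+1) ≤ lam k)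
    (p q : ℕ) (hp : 1 ≤ p) (hpq : p ≤ q) : lam q ≤ lam p := by
  induction hpq with
  | refl => exact le_rfl
  | @step m h ih => exact le_trans (hm m (le_trans hp h)) ih

lemma ksOut_nice (ε : ℤ) (lam : ℕ → ℕ) (j : ℕ) (hj : IsAdmissibleIndex ε lam j)
    (hn : KSNice lam) : KSNice (ksOut lam j) := by
  obtain ⟨h0, hm⟩ := hn
  rcases hj with ⟨hj1, hj2⟩ | ⟨⟨hj1, hq1, hqle, hqs1, hqs2, hqne1, hqne2⟩, heq⟩
  · constructor
    · simp only [ksOut, if_pos hj2, if_pos (Nat.zero_le j), h0]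
    · intro k hk
      simp only [ksOut, if_pos hj2]
      by_cases h1 : k + 1 ≤ j
      · rw [if_pos h1, if_pos (by omega : k ≤ j)]
        exact Nat.sub_le_sub_right (hm k hk) 2
      · by_cases h2 : k ≤ j
        · have hkj : k = j := by omega
          subst hkj
          rw [if_neg h1, if_pos h2]
          omega
        · rw [if_neg h1, if_neg h2]
          exact hm k hk
  · have hcond : ¬ (lam (j+1) + 2 ≤ lam j) := by omega
    constructor
    · simp only [ksOut, if_neg hcond, if_pos (by omega : (0:ℕ) < j), h0]
    · intro k hk
      simp only [ksOut, if_neg hcond]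
      by_cases h1 : k + 1 < j
      · rw [if_pos h1, if_pos (by omega : k < j)]
        exact Nat.sub_le_sub_right (hm k hk) 2
      by_cases h2 : k + 1 = j
      · subst h2
        rw [if_neg h1, if_pos (by omega : k + 1 ≤ k + 1 + 1),
          if_pos (by omega : k < k + 1)]
        have hmk : lam (k+1) ≤ lam k := hm k hk
        have hne : lam (k + 1 - 1) ≠ lam (k+1) := hqne1
        have hne' : lam k ≠ lam (k+1) := by
          rwa [show k + 1 - 1 = k from by omega] at hne
        have hpos : 1 ≤ lam (k+1) := le_trans hq1 hqle
        omega
      by_cases h3 : k = j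
      · subst h3
        rw [if_neg h1, if_pos (by omega : k + 1 ≤ k + 1), if_neg (by omega : ¬ k < k),
          if_pos (le_refl k |>.trans (by omega : k ≤ k + 1))]
        omega
      by_cases h4 : k = j + 1
      · subst h4
        rw [if_neg h1, if_neg (by omega : ¬ j + 1 + 1 ≤ j + 1), if_neg (by omega : ¬ j + 1 < j),
          if_pos (le_refl (j+1))]
        have hmk : lam (j+2) ≤ lam (j+1) := hm (j+1) (by omega)
        have hne : lam (j+1) ≠ lam (j+2) := hqne2
        show lam (j+2) ≤ lam (j+1) - 1
        omega
      · rw [if_neg h1, if_neg (by omega : ¬ k + 1 ≤ j + 1), if_neg (by omega : ¬ k < j),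
          if_neg (by omega : ¬ k ≤ j + 1)]
        exact hm k hk

lemma ksOut_parity (ε : ℤ) (lam : ℕ → ℕ) (j : ℕ) (hj : IsAdmissibleIndex ε lam j)
    (hn : KSNice lam) (p : ℕ) (hp : 1 ≤ p) :
    ksOut lam j p % 2 = lam p % 2 ∨ ε * (-1:ℤ)^(ksOut lam j p) = 1 := by
  obtain ⟨h0, hm⟩ := hn
  rcases hj with ⟨hj1, hj2⟩ | ⟨⟨hj1, hq1, hqle, hqs1, hqs2, hqne1, hqne2⟩, heq⟩
  · left
    simp only [ksOut, if_pos hj2]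
    by_cases hpj : p ≤ j
    · rw [if_pos hpj]
      have : lam j ≤ lam p := ks_chain lam hm p j hp hpj
      omega
    · rw [if_neg hpj]
  · have hcond : ¬ (lam (j+1) + 2 ≤ lam j) := by omega
    simp only [ksOut, if_neg hcond]
    by_cases h1 : p < j
    · left
      rw [if_pos h1]
      have hchain : lam (j-1) ≤ lam p := ks_chain lam hm p (j-1) hp (by omega)
      have hmj : lam j ≤ lam (j-1) := by
        have := hm (j-1) (by omega)
        rwa [show j - 1 + 1 = j from by omega] at this
      have hne : lam (j-1) ≠ lam j := hqne1
      have hpos : 1 ≤ lam j := le_trans hq1 hqle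
      omega
    by_cases h2 : p = j
    · right
      rw [if_neg h1, if_pos (by omega : p ≤ j + 1), h2]
      have hpos : 1 ≤ lam j := le_trans hq1 hqle
      have hrw : lam j = (lam j - 1) + 1 := by omega
      rw [hrw, ks_sign_succ] at hqs1
      linarith
    by_cases h3 : p = j + 1
    · right
      rw [if_neg h1, if_pos (by omega : p ≤ j + 1), h3]
      have hrw : lam (j+1) = (lam (j+1) - 1) + 1 := by omega
      rw [hrw, ks_sign_succ] at hqs2
      linarith
    · left
      rw [if_neg h1, if_neg (by omega : ¬ p ≤ j + 1)]

lemma ksApply_main (ε : ℤ) (hε : ε = 1 ∨ ε = -1) :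
    ∀ (l : List ℕ) (lam : ℕ → ℕ), KSNice lam → IsAdmissibleSeq ε lam l →
      KSNice (ksApply lam l) ∧ ∀ p : ℕ, 1 ≤ p →
        (ksApply lam l p % 2 = lam p % 2 ∨ ε * (-1:ℤ)^(ksApply lam l p) = 1) := by
  intro l
  induction l with
  | nil => exact fun lam hn _ => ⟨hn, fun p _ => Or.inl rfl⟩
  | cons j rest ih =>
    intro lam hn hadm
    obtain ⟨hj, hrest⟩ := hadm
    have hn' := ksOut_nice ε lam j hj hn
    obtain ⟨hN, hP⟩ := ih (ksOut lam j) hn' hrest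
    refine ⟨hN, fun p hp => ?_⟩
    have heq : ksApply lam (j :: rest) = ksApply (ksOut lam j) rest := rfl
    rw [heq]
    have hstep := ksOut_parity ε lam j hj hn p hp
    rcases hP p hp with h1 | h1
    · rcases hstep with h2 | h2
      · exact Or.inl (by omega)
      · right
        exact ((ks_sign_iff ε hε _ _).mpr h1).trans h2
    · exact Or.inr h1

/-- If `(i,i+1)` is a good 2-step of `λ ∈ 𝒫_ε(N)`, `𝐢` is an admissible sequence for `λ`
and `(i,i+1) ∈ Δ(λ^𝐢)`, then `(i,i+1)` is a good 2-step of `λ^𝐢`. -/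
theorem stmt7 (ε : ℤ) (hε : ε = 1 ∨ ε = -1) (N n : ℕ) (lam : ℕ → ℕ)
    (hlam : KSPartition ε N n lam) (i : ℕ)
    (hstep : IsTwoStep ε lam i) (hgood : ¬ IsBadStep lam i)
    (l : List ℕ) (hl : IsAdmissibleSeq ε lam l)
    (hstep' : IsTwoStep ε (ksApply lam l) i) :
    ¬ IsBadStep (ksApply lam l) i := by
  have hn : KSNice lam := ⟨hlam.zero, hlam.mono⟩
  obtain ⟨⟨h0', hm'⟩, hP⟩ := ksApply_main ε hε l lam hn hl
  obtain ⟨hi1, hp1, hle, hs1, hs2, hne1, hne2⟩ := hstep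
  obtain ⟨hi1', hp1', hle', hs1', hs2', hne1', hne2'⟩ := hstep'
  have hgood' : ¬ ((1 < i ∧ Even (lam (i-1) - lam i)) ∨ Even (lam (i+1) - lam (i+2))) := hgood
  -- parity preservation at i and i+1 (their ε-sign is -1 at the end)
  have pari : ksApply lam l i % 2 = lam i % 2 := by
    rcases hP i (by omega) with h | h
    · exact h
    · rw [h] at hs1'
      exact absurd hs1' (by norm_num)
  have pari1 : ksApply lam l (i+1) % 2 = lam (i+1) % 2 := by
    rcases hP (i+1) (by omega) with h | h
    · exact h
    · rw [h] at hs2'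
      exact absurd hs2' (by norm_num)
  -- the (i+1, i+2) difference
  have hd2 : ¬ Even (lam (i+1) - lam (i+2)) := fun h => hgood' (Or.inr h)
  have hle2 : lam (i+2) ≤ lam (i+1) := hlam.mono (i+1) (by omega)
  have hpar2 : lam (i+1) % 2 ≠ lam (i+2) % 2 := by
    rw [Nat.even_iff] at hd2; omega
  have hsign2 : ε * (-1:ℤ)^(lam (i+2)) = 1 := by
    rcases ks_sign_cases ε hε (lam (i+2)) with h | h
    · exact h
    · exact absurd ((ks_sign_iff ε hε _ _).mp (hs2.trans h.symm)) hpar2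
  have pari2 : ksApply lam l (i+2) % 2 = lam (i+2) % 2 := by
    rcases hP (i+2) (by omega) with h | h
    · exact h
    · exact (ks_sign_iff ε hε _ _).mp (h.trans hsign2.symm)
  have hmono2 : ksApply lam l (i+2) ≤ ksApply lam l (i+1) := hm' (i+1) (by omega)
  intro hbad
  have hbad' : (1 < i ∧ Even (ksApply lam l (i-1) - ksApply lam l i)) ∨
      Even (ksApply lam l (i+1) - ksApply lam l (i+2)) := hbad
  rcases hbad' with ⟨hi2, hbe⟩ | hbe
  · -- the (i-1, i) difference
    have hd1 : ¬ Even (lam (i-1) - lam i) := fun h => hgood' (Or.inl ⟨hi2, h⟩)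
    have hle1 : lam i ≤ lam (i-1) := by
      have := hlam.mono (i-1) (by omega)
      rwa [show i - 1 + 1 = i from by omega] at this
    have hpar1 : lam (i-1) % 2 ≠ lam i % 2 := by
      rw [Nat.even_iff] at hd1; omega
    have hsign1 : ε * (-1:ℤ)^(lam (i-1)) = 1 := by
      rcases ks_sign_cases ε hε (lam (i-1)) with h | h
      · exact h
      · exact absurd ((ks_sign_iff ε hε _ _).mp (h.trans hs1.symm)) hpar1
    have parim : ksApply lam l (i-1) % 2 = lam (i-1) % 2 := by
      rcases hP (i-1) (by omega) with h | h
      · exact h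
      · exact (ks_sign_iff ε hε _ _).mp (h.trans hsign1.symm)
    have hmono1 : ksApply lam l i ≤ ksApply lam l (i-1) := by
      have := hm' (i-1) (by omega)
      rwa [show i - 1 + 1 = i from by omega] at this
    rw [Nat.even_iff] at hbe
    omega
  · rw [Nat.even_iff] at hbe
    omega
end

section
/- If λ ∈ P_ε(N) is non-singular, then λ^𝐢 is non-singular for every admissible sequence 𝐢 for λ. -/
open Finset

lemma mono_chain (lam : ℕ → ℕ) (hm : ∀ k, 1 ≤ k → lam (k+1) ≤ lam k)
    (a b : ℕ) (ha : 1 ≤ a) (hab : a ≤ b) : lam b ≤ lam a := by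
  induction b with
  | zero => omega
  | succ n ih =>
    rcases Nat.eq_or_lt_of_le hab with h | h
    · rw [h]
    · exact le_trans (hm n (by omega)) (ih (by omega))

lemma sign_sub_two (ε : ℤ) (a : ℕ) (h : 2 ≤ a) :
    ε * (-1:ℤ)^(a-2) = ε * (-1:ℤ)^a := by
  obtain ⟨b, rfl⟩ : ∃ b, a = b + 2 := ⟨a - 2, by omega⟩
  simp [pow_add]

lemma sign_parity (ε : ℤ) (hε : ε = 1 ∨ ε = -1) (a b : ℕ)
    (ha : ε * (-1:ℤ)^a = -1) (hb : ε * (-1:ℤ)^b = -1) : a % 2 = b % 2 := by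
  have hne : ε ≠ 0 := by rcases hε with rfl | rfl <;> norm_num
  have hpow : ((-1:ℤ))^a = (-1:ℤ)^b := mul_left_cancel₀ hne (ha.trans hb.symm)
  rcases Nat.even_or_odd a with h | h <;> rcases Nat.even_or_odd b with h' | h'
  · rw [Nat.even_iff] at h h'; omega
  · exfalso; rw [h.neg_one_pow, h'.neg_one_pow] at hpow; norm_num at hpow
  · exfalso; rw [h.neg_one_pow, h'.neg_one_pow] at hpow; norm_num at hpow
  · rw [Nat.odd_iff] at h h'; omega

lemma sign_sub_one (ε : ℤ) (hε : ε = 1 ∨ ε = -1) (a : ℕ) (h1 : 1 ≤ a)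
    (ha : ε * (-1:ℤ)^a = -1) : ε * (-1:ℤ)^(a-1) ≠ -1 := by
  intro hb
  have := sign_parity ε hε a (a-1) ha hb
  omega

lemma ksOut_zero (lam : ℕ → ℕ) (i : ℕ) (h0 : lam 0 = 0) : ksOut lam i 0 = 0 := by
  simp only [ksOut]; split_ifs <;> omega

lemma ksOut_mono (ε : ℤ) (lam : ℕ → ℕ) (i : ℕ)
    (hm : ∀ k, 1 ≤ k → lam (k+1) ≤ lam k) (hi : IsAdmissibleIndex ε lam i) :
    ∀ k, 1 ≤ k → ksOut lam i (k+1) ≤ ksOut lam i k := by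
  intro k hk
  have hmk := hm k hk
  rcases hi with ⟨hi1, hc⟩ | ⟨⟨ii1, ip1, ilei, isi, isi1, inel, iner⟩, heq⟩
  · simp only [ksOut, if_pos hc]
    rcases Nat.lt_or_ge k i with h | h
    · rw [if_pos (by omega), if_pos (by omega)]; omega
    · rcases Nat.eq_or_lt_of_le h with rfl | h2
      · rw [if_neg (by omega), if_pos (le_refl i)]; omega
      · rw [if_neg (by omega), if_neg (by omega)]; omega
  · have hnc : ¬ (lam (i+1) + 2 ≤ lam i) := by omega
    simp only [ksOut, if_neg hnc]
    have h5 : k + 1 < i ∨ k + 1 = i ∨ k = i ∨ k = i + 1 ∨ i + 1 < k := by omega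
    rcases h5 with h | h | h | h | h
    · rw [if_pos (by omega), if_pos (by omega)]; omega
    · subst h
      rw [if_neg (by omega), if_pos (by omega), if_pos (by omega)]
      have hd : k + 1 - 1 = k := rfl
      rw [hd] at inel
      omega
    · subst h
      rw [if_neg (by omega), if_pos (by omega), if_neg (by omega), if_pos (by omega)]
      omega
    · subst h
      rw [if_neg (by omega), if_neg (by omega), if_neg (by omega), if_pos (by omega)]
      have hd : i + 1 + 1 = i + 2 := rfl
      rw [hd]
      rw [hd] at hmk
      omega
    · rw [if_neg (by omega), if_neg (by omega), if_neg (by omega), if_neg (by omega)]; omega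

lemma step_ns (ε : ℤ) (hε : ε = 1 ∨ ε = -1) (lam : ℕ → ℕ) (h0 : lam 0 = 0)
    (hm : ∀ k, 1 ≤ k → lam (k+1) ≤ lam k)
    (hns : NonSingular ε lam) (i : ℕ) (hi : IsAdmissibleIndex ε lam i) :
    NonSingular ε (ksOut lam i) := by
  intro j hts hbad
  obtain ⟨hj1, hp, hlej, hsj, hsj1, hne1, hne2⟩ := hts
  rcases hi with ⟨hi1, hc⟩ | ⟨hts2, heq⟩
  · -- Case 1
    have hv : ∀ k, ksOut lam i k = if k ≤ i then lam k - 2 else lam k := by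
      intro k; simp only [ksOut, if_pos hc]
    have hge2 : ∀ k, 1 ≤ k → k ≤ i → 2 ≤ lam k := by
      intro k hk hki
      have := mono_chain lam hm k i hk hki
      omega
    have hle : ∀ k, ksOut lam i k ≤ lam k := by
      intro k; rw [hv]; split_ifs <;> omega
    have tsign : ∀ k, ε * (-1:ℤ)^(ksOut lam i k) = ε * (-1:ℤ)^(lam k) := by
      intro k
      rw [hv]
      rcases Nat.eq_zero_or_pos k with rfl | hk
      · rw [if_pos (Nat.zero_le i), h0]
      · split_ifs with h
        · exact sign_sub_two ε (lam k) (hge2 k hk h)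
        · rfl
    have tne : ∀ k, ksOut lam i k ≠ ksOut lam i (k+1) → lam k ≠ lam (k+1) := by
      intro k hne
      rcases Nat.lt_or_ge k i with hk | hk
      · rw [hv, hv, if_pos (by omega), if_pos (by omega)] at hne
        rcases Nat.eq_zero_or_pos k with rfl | hk1
        · have := hge2 (0+1) (by omega) (by omega); omega
        · have := hge2 k hk1 (by omega); have := hge2 (k+1) (by omega) (by omega); omega
      · rcases Nat.eq_or_lt_of_le hk with rfl | hk2
        · omega
        · rw [hv, hv, if_neg (by omega), if_neg (by omega)] at hne; exact hne
    have tpar : ∀ k, 1 ≤ k →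
        (lam k - lam (k+1)) % 2 = (ksOut lam i k - ksOut lam i (k+1)) % 2 := by
      intro k hk
      have hmk := hm k hk
      rcases Nat.lt_or_ge k i with hlt | hge
      · rw [hv, hv, if_pos (by omega), if_pos (by omega)]
        have := hge2 (k+1) (by omega) (by omega); omega
      · rcases Nat.eq_or_lt_of_le hge with rfl | hk2
        · rw [hv, hv, if_pos (le_refl i), if_neg (by omega)]; omega
        · rw [hv, hv, if_neg (by omega), if_neg (by omega)]
    refine hns j ⟨hj1, ?_, hm j hj1, ?_, ?_, ?_, tne _ hne2⟩ ?_
    · have := hle (j+1); omega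
    · rw [← tsign j]; exact hsj
    · rw [← tsign (j+1)]; exact hsj1
    · have h := tne (j-1); rw [Nat.sub_add_cancel hj1] at h; exact h hne1
    · rcases hbad with ⟨hj2, he⟩ | he
      · left
        refine ⟨hj2, ?_⟩
        rw [Nat.even_iff] at he ⊢
        have h := tpar (j-1) (by omega)
        rw [Nat.sub_add_cancel (by omega : 1 ≤ j)] at h
        omega
      · right
        rw [Nat.even_iff] at he ⊢
        have h := tpar (j+1) (by omega)
        have hd : j + 1 + 1 = j + 2 := rfl
        rw [hd] at h
        omega
  · -- Case 2
    obtain ⟨ii1, ip1, ilei, isi, isi1, inel, iner⟩ := id hts2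
    have hnc : ¬ (lam (i+1) + 2 ≤ lam i) := by omega
    have hv : ∀ k, ksOut lam i k =
        if k < i then lam k - 2 else if k ≤ i + 1 then lam k - 1 else lam k := by
      intro k; simp only [ksOut, if_neg hnc]
    have hgood : ¬ IsBadStep lam i := hns i hts2
    simp only [IsBadStep, Nat.even_iff] at hgood
    push_neg at hgood
    have hll : 2 ≤ i → lam i + 1 ≤ lam (i-1) := by
      intro h2
      have h := hm (i-1) (by omega)
      have hd : i - 1 + 1 = i := by omega
      rw [hd] at h
      omega
    have hge2' : ∀ k, 1 ≤ k → k < i → 2 ≤ lam k := by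
      intro k hk hki
      have hA := mono_chain lam hm k (i-1) hk (by omega)
      have hB := hll (by omega)
      omega
    have hsplit : j + 3 ≤ i ∨ j + 2 = i ∨ j + 1 = i ∨ j = i ∨ j = i + 1 ∨ j = i + 2 ∨
        i + 3 ≤ j := by omega
    rcases hsplit with h | h | h | h | h | h | h
    · -- all four positions < i : transfer to lam
      have e0 : ksOut lam i (j-1) = lam (j-1) - 2 := by rw [hv, if_pos (by omega)]
      have e1 : ksOut lam i j = lam j - 2 := by rw [hv, if_pos (by omega)]
      have e2 : ksOut lam i (j+1) = lam (j+1) - 2 := by rw [hv, if_pos (by omega)]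
      have e3 : ksOut lam i (j+2) = lam (j+2) - 2 := by rw [hv, if_pos (by omega)]
      have g1 := hge2' j hj1 (by omega)
      have g2 := hge2' (j+1) (by omega) (by omega)
      have g3 := hge2' (j+2) (by omega) (by omega)
      refine hns j ⟨hj1, by omega, hm j hj1, ?_, ?_, ?_, ?_⟩ ?_
      · rw [e1, sign_sub_two ε _ g1] at hsj; exact hsj
      · rw [e2, sign_sub_two ε _ g2] at hsj1; exact hsj1
      · rw [e1] at hne1
        rcases Nat.eq_or_lt_of_le hj1 with h1 | h1
        · have hd : j - 1 = 0 := by omega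
          rw [hd, h0]; omega
        · have g0 := hge2' (j-1) (by omega) (by omega)
          rw [e0] at hne1; omega
      · rw [e2, e3] at hne2; omega
      · rcases hbad with ⟨hj2, he⟩ | he
        · left
          refine ⟨hj2, ?_⟩
          rw [e0, e1, Nat.even_iff] at he
          rw [Nat.even_iff]
          have g0 := hge2' (j-1) (by omega) (by omega)
          have hmm := hm (j-1) (by omega)
          have hd : j - 1 + 1 = j := by omega
          rw [hd] at hmm
          omega
        · right
          rw [e2, e3, Nat.even_iff] at he
          rw [Nat.even_iff]
          have hmm := hm (j+1) (by omega)
          omega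
    · -- j + 2 = i : parity contradiction on the left of the 2-step at i
      have e2 : ksOut lam i (j+1) = lam (j+1) - 2 := by rw [hv, if_pos (by omega)]
      have g2 : 2 ≤ lam (j+1) := hge2' (j+1) (by omega) (by omega)
      rw [e2, sign_sub_two ε _ g2] at hsj1
      have hpar := sign_parity ε hε _ _ hsj1 isi
      have hB := hll (by omega)
      have hd : i - 1 = j + 1 := by omega
      rw [hd] at hB
      have hg := hgood.1 (by omega)
      rw [hd] at hg
      omega
    · -- j + 1 = i : sign of lam i - 1 flipped
      have e2 : ksOut lam i (j+1) = lam (j+1) - 1 := by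
        rw [hv, if_neg (by omega), if_pos (by omega)]
      rw [e2] at hsj1
      have hi' : ε * (-1:ℤ)^(lam (j+1)) = -1 := by rw [h]; exact isi
      exact sign_sub_one ε hε (lam (j+1)) (by rw [h]; omega) hi' hsj1
    · -- j = i
      have e1 : ksOut lam i j = lam j - 1 := by
        rw [hv, if_neg (by omega), if_pos (by omega)]
      rw [e1] at hsj
      have hi' : ε * (-1:ℤ)^(lam j) = -1 := by rw [h]; exact isi
      exact sign_sub_one ε hε (lam j) (by rw [h]; omega) hi' hsj
    · -- j = i + 1
      have e1 : ksOut lam i j = lam j - 1 := by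
        rw [hv, if_neg (by omega), if_pos (by omega)]
      rw [e1] at hsj
      have hi' : ε * (-1:ℤ)^(lam j) = -1 := by rw [h]; exact isi1
      exact sign_sub_one ε hε (lam j) (by rw [h]; omega) hi' hsj
    · -- j = i + 2 : parity contradiction on the right of the 2-step at i
      have e1 : ksOut lam i j = lam j := by
        rw [hv, if_neg (by omega), if_neg (by omega)]
      rw [e1] at hsj
      have hi' : ε * (-1:ℤ)^(lam (i+2)) = -1 := by rw [← h]; exact hsj
      have hpar := sign_parity ε hε _ _ hi' isi1
      have hmm := hm (i+1) (by omega)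
      have hd : i + 1 + 1 = i + 2 := rfl
      rw [hd] at hmm
      have hg := hgood.2
      omega
    · -- i + 3 ≤ j : everything unchanged
      have e0 : ksOut lam i (j-1) = lam (j-1) := by
        rw [hv, if_neg (by omega), if_neg (by omega)]
      have e1 : ksOut lam i j = lam j := by
        rw [hv, if_neg (by omega), if_neg (by omega)]
      have e2 : ksOut lam i (j+1) = lam (j+1) := by
        rw [hv, if_neg (by omega), if_neg (by omega)]
      have e3 : ksOut lam i (j+2) = lam (j+2) := by
        rw [hv, if_neg (by omega), if_neg (by omega)]
      refine hns j ⟨hj1, by rw [e2] at hp; exact hp, hm j hj1,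
        by rw [e1] at hsj; exact hsj, by rw [e2] at hsj1; exact hsj1,
        by rw [e0, e1] at hne1; exact hne1, by rw [e2, e3] at hne2; exact hne2⟩ ?_
      rcases hbad with ⟨hj2, he⟩ | he
      · left; exact ⟨hj2, by rw [e0, e1] at he; exact he⟩
      · right; rw [e2, e3] at he; exact he
/-- If `λ ∈ 𝒫_ε(N)` is non-singular then `λ^𝐢` is non-singular for any admissible
sequence `𝐢` for `λ`. -/
theorem stmt8 (ε : ℤ) (hε : ε = 1 ∨ ε = -1) (N n : ℕ) (lam : ℕ → ℕ)
    (hlam : KSPartition ε N n lam) (hns : NonSingular ε lam)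
    (l : List ℕ) (hl : IsAdmissibleSeq ε lam l) :
    NonSingular ε (ksApply lam l) := by
  have h0 : lam 0 = 0 := hlam.zero
  have hmono : ∀ k, 1 ≤ k → lam (k+1) ≤ lam k := hlam.mono
  clear hlam
  induction l generalizing lam with
  | nil => exact hns
  | cons i rest ih =>
    obtain ⟨hi, hrest⟩ := hl
    exact ih (ksOut lam i)
      (step_ns ε hε lam h0 hmono hns i hi) hrest
      (ksOut_zero lam i h0) (ksOut_mono ε lam i hmono hi)
end

section
/- A good 2-cluster of λ ∈ P_ε(N) is maximal, i.e. it is not a proper subsequence of any 2-cluster of λ: if i_1 < … < i_k is a good 2-cluster of λ, then (i_1 − 2, i_1 − 1) ∉ Δ(λ) and (i_k + 2, i_k + 3) ∉ Δ(λ). -/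
open Finset

lemma parity_iff_aux {ε : ℤ} (hε : ε = 1 ∨ ε = -1) {x y : ℕ}
    (hx : ε * (-1 : ℤ) ^ x = -1) (hy : ε * (-1 : ℤ) ^ y = -1) : Even x ↔ Even y := by
  rcases hε with rfl | rfl
  · simp only [one_mul] at hx hy
    have h1 : ¬ Even x := fun h => by rw [Even.neg_one_pow h] at hx; norm_num at hx
    have h2 : ¬ Even y := fun h => by rw [Even.neg_one_pow h] at hy; norm_num at hy
    simp [h1, h2]
  · have hx' : (-1 : ℤ) ^ x = 1 := by linarith
    have hy' : (-1 : ℤ) ^ y = 1 := by linarith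
    have h1 : Even x := by
      rcases Nat.even_or_odd x with h | h
      · exact h
      · rw [Odd.neg_one_pow h] at hx'; norm_num at hx'
    have h2 : Even y := by
      rcases Nat.even_or_odd y with h | h
      · exact h
      · rw [Odd.neg_one_pow h] at hy'; norm_num at hy'
    simp [h1, h2]

/-- A good 2-cluster `i_1 < … < i_k` of `λ ∈ 𝒫_ε(N)` is maximal: neither
`(i_1 − 2, i_1 − 1)` nor `(i_k + 2, i_k + 3)` is a 2-step of `λ`. -/
theorem stmt10 (ε : ℤ) (hε : ε = 1 ∨ ε = -1) (N n : ℕ) (lam : ℕ → ℕ)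
    (hlam : KSPartition ε N n lam) (a k : ℕ)
    (hc : IsTwoCluster ε lam a k) (hg : ¬ HasBadBoundary lam a k) :
    ¬ IsTwoStep ε lam (a - 2) ∧ ¬ IsTwoStep ε lam (a + 2 * (k - 1) + 2) := by
  obtain ⟨hk2, hsteps⟩ := hc
  have h0 := hsteps 0 (by omega)
  have hlast := hsteps (k - 1) (by omega)
  simp only [Nat.mul_zero, Nat.add_zero] at h0
  constructor
  · rintro ⟨hi, _, _, _, hpar1, _, hne⟩
    have ha3 : 3 ≤ a := by omega
    have e1 : a - 2 + 1 = a - 1 := by omega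
    have e2 : a - 2 + 2 = a := by omega
    rw [e1] at hpar1
    rw [e1, e2] at hne
    have hpar2 := h0.2.2.2.1
    have hmono : lam a ≤ lam (a - 1) := by
      have := hlam.mono (a - 1) (by omega)
      rwa [show a - 1 + 1 = a by omega] at this
    have heven : Even (lam (a - 1) - lam a) :=
      (Nat.even_sub hmono).mpr (parity_iff_aux hε hpar1 hpar2)
    exact hg (Or.inl ⟨by omega, by omega, heven⟩)
  · rintro ⟨_, _, _, hpar2, _, hne, _⟩
    rw [show a + 2 * (k - 1) + 2 - 1 = a + 2 * (k - 1) + 1 by omega] at hne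
    have hpar1 := hlast.2.2.2.2.1
    have hmono : lam (a + 2 * (k - 1) + 2) ≤ lam (a + 2 * (k - 1) + 1) :=
      hlam.mono (a + 2 * (k - 1) + 1) (by omega)
    have heven : Even (lam (a + 2 * (k - 1) + 1) - lam (a + 2 * (k - 1) + 2)) :=
      (Nat.even_sub hmono).mpr (parity_iff_aux hε hpar1 hpar2)
    exact hg (Or.inr ⟨by omega, heven⟩)
end
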